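/- arXiv:math/0307209 — 5 statements merged into one kernel-verified Lean document; each statement's English description precedes it below -/
import Mathlib

section
/- The formal power series T(x) = ∑_{n ≥ 1} (n^{n-1}/n!) x^n satisfies the functional equation x · exp(T(x)) = T(x). -/
open PowerSeries Finset

/-- The exponential of a formal power series (with zero constant term),
defined coefficientwise: `coeff n (exp f) = ∑_{k ≤ n} coeff n (f^k) / k!`. -/
noncomputable def expOf (f : PowerSeries ℚ) : PowerSeries ℚ :=
  PowerSeries.mk fun n => ∑ k ∈ Finset.range (n + 1), (PowerSeries.coeff n (f ^ k)) / (k.factorial : ℚ)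

/-- The tree function `T(x) = ∑_{n ≥ 1} n^{n-1} x^n / n!`. -/
noncomputable def treeFun : PowerSeries ℚ :=
  PowerSeries.mk fun n => if n = 0 then 0 else (n : ℚ) ^ (n - 1) / (n.factorial : ℚ)


section AbelIdentity
open fwdDiff

lemma fwdDiff_pow_eq_zero : ∀ m n : ℕ, m < n → (fwdDiff (1:ℚ))^[n] (fun x : ℚ => x ^ m) = 0 := by
  intro m
  induction m using Nat.strong_induction_on with
  | _ m IH =>
    intro n hn
    obtain ⟨n, rfl⟩ : ∃ n', n = n' + 1 := ⟨n - 1, by omega⟩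
    rw [Function.iterate_succ_apply]
    have h1 : Δ_[(1:ℚ)] (fun x : ℚ => x ^ m)
        = ∑ j ∈ range m, (m.choose j : ℚ) • (fun x : ℚ => x ^ j) := by
      funext x
      simp only [fwdDiff, Finset.sum_apply, Pi.smul_apply, smul_eq_mul]
      rw [add_pow, Finset.sum_range_succ]
      simp [mul_comm]
    rw [h1, fwdDiff_iter_finset_sum]
    apply Finset.sum_eq_zero
    intro j hj
    have hjm := mem_range.mp hj
    rw [fwdDiff_iter_const_smul, IH j hjm n (by omega), smul_zero]

lemma alt_sum_pow (n : ℕ) (hn : 1 ≤ n) :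
    ∑ k ∈ range (n + 1), (-1 : ℚ) ^ (n - k) * (n.choose k) * (k : ℚ) ^ (n - 1) = 0 := by
  have h := fwdDiff_iter_eq_sum_shift (1 : ℚ) (fun x : ℚ => x ^ (n - 1)) n 0
  rw [fwdDiff_pow_eq_zero (n-1) n (by omega)] at h
  have h' := h.symm
  simp only [Pi.zero_apply, zero_add, nsmul_eq_mul, mul_one, zsmul_eq_mul] at h'
  rw [← h']
  apply Finset.sum_congr rfl
  intro k hk
  push_cast
  ring

end AbelIdentity

section AbelPoly
open Polynomial

noncomputable def abelP (n : ℕ) : Polynomial ℚ :=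
  ∑ k ∈ Icc 1 n, Polynomial.C ((n.choose k : ℚ) * (k : ℚ) ^ (k - 1)) * (Polynomial.X + Polynomial.C ((n : ℚ) - k)) ^ (n - k)

lemma choose_succ_cast (n k : ℕ) :
    ((n + 1).choose k : ℚ) * ((n + 1 - k : ℕ) : ℚ) = ((n : ℚ) + 1) * (n.choose k : ℚ) := by
  have h := Nat.choose_mul_succ_eq n k
  have h' : ((n.choose k * (n + 1) : ℕ) : ℚ) = (((n + 1).choose k * (n + 1 - k) : ℕ) : ℚ) := by
    rw [h]
  push_cast at h'
  rw [← h']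
  ring

lemma sum_Icc_one (f : ℕ → ℚ) (n : ℕ) : ∑ i ∈ Icc 1 n, f i = ∑ i ∈ range n, f (1 + i) := by
  rw [← Finset.Ico_add_one_right_eq_Icc, Finset.sum_Ico_eq_sum_range]
  simp

lemma abelP_eval_eq_zero (n : ℕ) (hn : 2 ≤ n) : (abelP n).eval (-(n : ℚ)) = 0 := by
  rw [abelP, Polynomial.eval_finset_sum]
  have key : ∀ k ∈ Icc 1 n,
      Polynomial.eval (-(n:ℚ)) (Polynomial.C ((n.choose k : ℚ) * (k : ℚ) ^ (k - 1)) * (Polynomial.X + Polynomial.C ((n : ℚ) - k)) ^ (n - k))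
      = (-1:ℚ) ^ (n - k) * (n.choose k) * (k:ℚ) ^ (n - 1) := by
    intro k hk
    obtain ⟨hk1, hk2⟩ := mem_Icc.mp hk
    rw [Polynomial.eval_mul, Polynomial.eval_C, Polynomial.eval_pow, Polynomial.eval_add, Polynomial.eval_X, Polynomial.eval_C]
    have h1 : -(n:ℚ) + ((n:ℚ) - k) = -k := by ring
    rw [h1, neg_pow]
    have hkk : (k:ℚ) ^ (k-1) * (k:ℚ) ^ (n-k) = (k:ℚ) ^ (n-1) := by
      rw [← pow_add]; congr 1; omega
    linear_combination ((n.choose k : ℚ)) * ((-1:ℚ)^(n-k)) * hkk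
  rw [Finset.sum_congr rfl key]
  have h0 := alt_sum_pow n (by omega)
  rw [Finset.sum_range_succ'] at h0
  have hz : (-1:ℚ) ^ (n - 0) * ((n.choose 0 : ℕ) : ℚ) * ((0:ℕ):ℚ) ^ (n-1) = 0 := by
    rw [Nat.cast_zero, zero_pow (by omega)]; ring
  rw [hz, add_zero] at h0
  rw [sum_Icc_one]
  rw [← h0]
  apply Finset.sum_congr rfl
  intro i hi
  rw [add_comm 1 i]

lemma abelP_eq (n : ℕ) (hn : 1 ≤ n) :
    abelP n = Polynomial.C (n : ℚ) * (Polynomial.X + Polynomial.C (n : ℚ)) ^ (n - 1) := by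
  induction n, hn using Nat.le_induction with
  | base =>
    rw [abelP]
    simp
  | succ n hn IH =>
    have hder : Polynomial.derivative (abelP (n+1))
        = Polynomial.derivative (Polynomial.C (((n+1:ℕ)):ℚ) * (Polynomial.X + Polynomial.C (((n+1:ℕ)):ℚ)) ^ n) := by
      rw [abelP, Polynomial.derivative_sum]
      have hterm : ∀ k ∈ Icc 1 (n+1),
          Polynomial.derivative (Polynomial.C (((n+1).choose k : ℚ) * (k : ℚ) ^ (k - 1)) *
              (Polynomial.X + Polynomial.C (((n+1:ℕ) : ℚ) - k)) ^ (n + 1 - k))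
          = Polynomial.C (((n+1).choose k : ℚ) * (k : ℚ) ^ (k - 1) * ((n + 1 - k : ℕ) : ℚ)) *
              (Polynomial.X + Polynomial.C (((n+1:ℕ) : ℚ) - k)) ^ (n - k) := by
        intro k hk
        obtain ⟨hk1, hk2⟩ := mem_Icc.mp hk
        rw [Polynomial.derivative_C_mul, Polynomial.derivative_pow]
        have e1 : n + 1 - k - 1 = n - k := by omega
        rw [e1]
        have e2 : Polynomial.derivative (Polynomial.X + Polynomial.C (((n+1:ℕ) : ℚ) - k)) = 1 := by
          rw [Polynomial.derivative_add, Polynomial.derivative_X, Polynomial.derivative_C, add_zero]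
        rw [e2, mul_one, ← mul_assoc, ← Polynomial.C_mul]
      rw [Finset.sum_congr rfl hterm]
      rw [Finset.sum_Icc_succ_top (by omega : (1:ℕ) ≤ n + 1)]
      have htop : Polynomial.C (((n+1).choose (n+1) : ℚ) * ((n+1 : ℕ) : ℚ) ^ (n + 1 - 1) *
          ((n + 1 - (n+1) : ℕ) : ℚ)) * (Polynomial.X + Polynomial.C (((n+1:ℕ) : ℚ) - ((n+1:ℕ):ℚ))) ^ (n - (n+1)) = 0 := by
        simp
      rw [htop, add_zero]
      have hrhs : Polynomial.derivative (Polynomial.C (((n+1:ℕ):ℚ)) * (Polynomial.X + Polynomial.C (((n+1:ℕ):ℚ))) ^ n)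
          = Polynomial.C (((n+1:ℕ):ℚ)) * (Polynomial.C ((n:ℚ)) * (Polynomial.X + Polynomial.C (((n+1:ℕ):ℚ))) ^ (n-1)) := by
        rw [Polynomial.derivative_C_mul, Polynomial.derivative_pow]
        have : Polynomial.derivative (Polynomial.X + Polynomial.C (((n+1:ℕ):ℚ))) = 1 := by
          rw [Polynomial.derivative_add, Polynomial.derivative_X, Polynomial.derivative_C, add_zero]
        rw [this, mul_one]
      rw [hrhs]
      have hstep : (∑ k ∈ Icc 1 n, Polynomial.C (((n+1).choose k : ℚ) * (k : ℚ) ^ (k - 1) * ((n + 1 - k : ℕ) : ℚ)) *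
            (Polynomial.X + Polynomial.C (((n+1:ℕ) : ℚ) - k)) ^ (n - k))
          = Polynomial.C (((n+1:ℕ):ℚ)) * ((abelP n).comp (Polynomial.X + Polynomial.C 1)) := by
        rw [abelP, Polynomial.sum_comp, Finset.mul_sum]
        apply Finset.sum_congr rfl
        intro k hk
        obtain ⟨hk1, hk2⟩ := mem_Icc.mp hk
        rw [Polynomial.mul_comp, Polynomial.C_comp, Polynomial.pow_comp, Polynomial.add_comp, Polynomial.X_comp, Polynomial.C_comp]
        have hb : (Polynomial.X + Polynomial.C (1:ℚ) + Polynomial.C ((n:ℚ) - k)) = Polynomial.X + Polynomial.C (((n+1:ℕ):ℚ) - k) := by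
          rw [add_assoc, ← Polynomial.C_add]
          push_cast
          ring_nf
        rw [hb, ← mul_assoc, ← Polynomial.C_mul]
        congr 1
        rw [Polynomial.C_inj]
        have hcs := choose_succ_cast n k
        push_cast at hcs ⊢
        linear_combination (k:ℚ)^(k-1) * hcs
      rw [hstep, IH, Polynomial.mul_comp, Polynomial.C_comp, Polynomial.pow_comp, Polynomial.add_comp, Polynomial.X_comp, Polynomial.C_comp]
      have hb2 : (Polynomial.X + Polynomial.C (1:ℚ) + Polynomial.C ((n:ℚ))) = Polynomial.X + Polynomial.C (((n+1:ℕ):ℚ)) := by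
        rw [add_assoc, ← Polynomial.C_add]
        push_cast
        ring_nf
      rw [hb2]
    -- Polynomial.derivative equal ⇒ difference constant
    have hD : abelP (n+1) - Polynomial.C (((n+1:ℕ):ℚ)) * (Polynomial.X + Polynomial.C (((n+1:ℕ):ℚ))) ^ n
        = Polynomial.C ((abelP (n+1) - Polynomial.C (((n+1:ℕ):ℚ)) * (Polynomial.X + Polynomial.C (((n+1:ℕ):ℚ))) ^ n).coeff 0) :=
      Polynomial.eq_C_of_derivative_eq_zero (by rw [Polynomial.derivative_sub, hder, sub_self])
    have heval := congrArg (Polynomial.eval (-((n+1:ℕ):ℚ))) hD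
    rw [Polynomial.eval_sub, abelP_eval_eq_zero (n+1) (by omega), Polynomial.eval_C, Polynomial.eval_mul, Polynomial.eval_C,
      Polynomial.eval_pow, Polynomial.eval_add, Polynomial.eval_X, Polynomial.eval_C] at heval
    have hz : (-(((n+1:ℕ):ℚ)) + ((n+1:ℕ):ℚ)) = 0 := by ring
    rw [hz, zero_pow (by omega), mul_zero, sub_zero] at heval
    have hzero : abelP (n+1) - Polynomial.C (((n+1:ℕ):ℚ)) * (Polynomial.X + Polynomial.C (((n+1:ℕ):ℚ))) ^ n = 0 := by
      rw [hD, ← heval, map_zero]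
    rw [sub_eq_zero] at hzero
    rw [hzero]
    norm_num

lemma abel_num (n : ℕ) (hn : 1 ≤ n) :
    ∑ k ∈ Icc 1 n, (n.choose k : ℚ) * (k:ℚ)^(k-1) * ((n:ℚ)-k)^(n-k)
      = (n:ℚ) * (n:ℚ)^(n-1) := by
  have h := congrArg (Polynomial.eval 0) (abelP_eq n hn)
  rw [abelP, Polynomial.eval_finset_sum, Polynomial.eval_mul, Polynomial.eval_C, Polynomial.eval_pow, Polynomial.eval_add, Polynomial.eval_X, Polynomial.eval_C, zero_add] at h
  rw [← h]
  apply Finset.sum_congr rfl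
  intro k hk
  rw [Polynomial.eval_mul, Polynomial.eval_C, Polynomial.eval_pow, Polynomial.eval_add, Polynomial.eval_X, Polynomial.eval_C, zero_add]

lemma abel_key (n : ℕ) :
    ∑ k ∈ Icc 1 n, ((n+1).choose k : ℚ) * (k:ℚ)^(k-1) * (((n+1:ℕ):ℚ)-k)^(n+1-k)
      = (n:ℚ) * ((n+1:ℕ):ℚ)^n := by
  have h := abel_num (n+1) (by omega)
  rw [Finset.sum_Icc_succ_top (by omega : (1:ℕ) ≤ n + 1)] at h
  have htop : (((n+1)).choose (n+1) : ℚ) * ((n+1:ℕ):ℚ)^(n+1-1) * ((((n+1:ℕ)):ℚ)-((n+1:ℕ):ℚ))^(n+1-(n+1))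
      = ((n+1:ℕ):ℚ)^n := by
    simp
  rw [htop] at h
  have h2 : ((n+1:ℕ):ℚ) * ((n+1:ℕ):ℚ)^(n+1-1) = ((n:ℚ)+1) * ((n+1:ℕ):ℚ)^n := by
    push_cast; ring_nf
  rw [h2] at h
  push_cast at h ⊢
  linear_combination h

end AbelPoly

lemma conv_id (m : ℕ) :
    ∑ i ∈ range m, (((i+1:ℕ):ℚ)^i / ((i+1).factorial : ℚ)) *
      ((((m-i:ℕ)):ℚ)^(m-i-1) / ((m-i).factorial : ℚ) * (((m-i:ℕ)):ℚ))
    = (m:ℚ) * ((m+1:ℕ):ℚ)^m / ((m+1).factorial : ℚ) := by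
  have h := abel_key m
  rw [sum_Icc_one] at h
  rw [← h, Finset.sum_div]
  apply Finset.sum_congr rfl
  intro i hi
  have him := mem_range.mp hi
  have e1 : (1:ℕ) + i - 1 = i := by omega
  have e2 : m + 1 - (1+i) = m - i := by omega
  have e3 : ((m+1:ℕ):ℚ) - ((1+i:ℕ):ℚ) = ((m-i:ℕ):ℚ) := by
    have h4 : (m - i : ℕ) + (1 + i) = m + 1 := by omega
    have h5 := congrArg (Nat.cast : ℕ → ℚ) h4
    push_cast at h5 ⊢
    linarith
  have hch : (((m+1).choose (1+i) : ℕ) : ℚ)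
      = ((m+1).factorial : ℚ) / (((1+i).factorial : ℚ) * ((m-i).factorial : ℚ)) := by
    rw [Nat.cast_choose ℚ (by omega), e2]
  have hB : ((m-i:ℕ):ℚ)^(m-i-1) * ((m-i:ℕ):ℚ) = ((m-i:ℕ):ℚ)^(m-i) := by
    rw [← pow_succ]
    congr 1
    omega
  rw [e1, e2, e3, hch]
  have f1 : (((1+i).factorial : ℕ) : ℚ) ≠ 0 := Nat.cast_ne_zero.mpr (Nat.factorial_ne_zero _)
  have f2 : (((m-i).factorial : ℕ) : ℚ) ≠ 0 := Nat.cast_ne_zero.mpr (Nat.factorial_ne_zero _)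
  have f3 : (((m+1).factorial : ℕ) : ℚ) ≠ 0 := Nat.cast_ne_zero.mpr (Nat.factorial_ne_zero _)
  have f4 : (((i+1).factorial : ℕ) : ℚ) ≠ 0 := Nat.cast_ne_zero.mpr (Nat.factorial_ne_zero _)
  have e5 : (1 : ℕ) + i = i + 1 := by omega
  rw [e5] at *
  field_simp
  rw [← hB]

lemma fun_eq : X * ((1 - treeFun) * d⁄dX ℚ treeFun) = treeFun := by
  ext n
  cases n with
  | zero =>
    rw [PowerSeries.coeff_zero_eq_constantCoeff, map_mul, constantCoeff_X, zero_mul]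
    rw [treeFun, PowerSeries.coeff_zero_eq_constantCoeff.symm, coeff_mk]
    simp
  | succ m =>
    rw [coeff_succ_X_mul, sub_mul, one_mul, map_sub, coeff_derivative, PowerSeries.coeff_mul,
      Finset.Nat.sum_antidiagonal_eq_sum_range_succ_mk, Finset.sum_range_succ']
    have h0 : (coeff 0) treeFun * (coeff (m - 0)) (d⁄dX ℚ treeFun) = 0 := by
      rw [treeFun, coeff_mk]
      simp
    rw [h0, add_zero]
    have hterm : ∀ i ∈ range m,
        (coeff (i+1)) treeFun * (coeff (m - (i+1))) (d⁄dX ℚ treeFun)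
        = (((i+1:ℕ):ℚ)^i / ((i+1).factorial : ℚ)) *
            ((((m-i:ℕ)):ℚ)^(m-i-1) / ((m-i).factorial : ℚ) * (((m-i:ℕ)):ℚ)) := by
      intro i hi
      have him := mem_range.mp hi
      rw [coeff_derivative, treeFun, coeff_mk, coeff_mk]
      rw [if_neg (by omega), if_neg (by omega)]
      have e1 : m - (i+1) + 1 = m - i := by omega
      have e2 : i + 1 - 1 = i := by omega
      have e3 : m - i - 1 = m - (i+1) := by omega
      rw [e1, e2, e3]
      have e4 : ((m - (i+1) : ℕ):ℚ) + 1 = ((m-i:ℕ):ℚ) := by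
        have h4 : (m - (i+1) : ℕ) + 1 = m - i := by omega
        have h5 := congrArg (Nat.cast : ℕ → ℚ) h4
        push_cast at h5
        linarith
      rw [e4]
    rw [Finset.sum_congr rfl hterm, conv_id]
    rw [treeFun, coeff_mk, if_neg (by omega : ¬(m + 1 = 0))]
    have e5 : m + 1 - 1 = m := by omega
    rw [e5]
    have f3 : (((m+1).factorial : ℕ) : ℚ) ≠ 0 := Nat.cast_ne_zero.mpr (Nat.factorial_ne_zero _)
    field_simp
    ring

lemma coeff_treeFun_pow_eq_zero {k m : ℕ} (h : m < k) : coeff m (treeFun ^ k) = 0 := by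
  have hX : (X : ℚ⟦X⟧) ∣ treeFun := by
    have h1 : (X : ℚ⟦X⟧) ^ 1 ∣ treeFun := by
      rw [PowerSeries.X_pow_dvd_iff]
      intro j hj
      interval_cases j
      rw [treeFun, coeff_mk]
      simp
    rwa [pow_one] at h1
  exact PowerSeries.X_pow_dvd_iff.mp (pow_dvd_pow_of_dvd hX k) m h

lemma coeff_expOf (f : PowerSeries ℚ) (n : ℕ) :
    coeff n (expOf f) = ∑ k ∈ Finset.range (n + 1), (coeff n (f ^ k)) / (k.factorial : ℚ) := by
  rw [expOf, coeff_mk]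

lemma deriv_expOf : d⁄dX ℚ (expOf treeFun) = d⁄dX ℚ treeFun * expOf treeFun := by
  ext n
  rw [coeff_derivative, PowerSeries.coeff_mul]
  rw [coeff_expOf, Finset.sum_mul, Finset.sum_range_succ']
  have h0 : (coeff (n+1)) (treeFun ^ 0) / ((Nat.factorial 0 : ℕ):ℚ) * ((n:ℚ)+1) = 0 := by
    rw [pow_zero, PowerSeries.coeff_one, if_neg (by omega)]
    simp
  rw [h0, add_zero]
  have hL : ∀ k ∈ range (n+1),
      (coeff (n+1)) (treeFun ^ (k+1)) / (((k+1).factorial : ℕ):ℚ) * ((n:ℚ)+1)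
      = (coeff n) (d⁄dX ℚ treeFun * treeFun ^ k) / ((k.factorial:ℕ):ℚ) := by
    intro k hk
    have hd : d⁄dX ℚ (treeFun ^ (k+1)) = (k+1) • (treeFun ^ k • d⁄dX ℚ treeFun) := by
      rw [Derivation.leibniz_pow, Nat.add_sub_cancel]
    have h1 : (coeff (n+1)) (treeFun^(k+1)) * ((n:ℚ)+1)
        = (coeff n) (d⁄dX ℚ (treeFun ^ (k+1))) := (coeff_derivative _ n).symm
    have h2 : (coeff n) (d⁄dX ℚ (treeFun ^ (k+1)))
        = ((k:ℚ)+1) * (coeff n) (d⁄dX ℚ treeFun * treeFun ^ k) := by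
      rw [hd, map_nsmul, smul_eq_mul, nsmul_eq_mul, mul_comm (treeFun ^ k)]
      push_cast
      ring
    have hf : (((k+1).factorial : ℕ):ℚ) = ((k:ℚ)+1) * ((k.factorial:ℕ):ℚ) := by
      rw [Nat.factorial_succ]
      push_cast
      ring
    have fk : ((k.factorial:ℕ):ℚ) ≠ 0 := Nat.cast_ne_zero.mpr (Nat.factorial_ne_zero _)
    have fk1 : ((k:ℚ)+1) ≠ 0 := by positivity
    rw [div_mul_eq_mul_div, h1, h2, hf]
    field_simp
  rw [Finset.sum_congr rfl hL]
  have hR : ∀ p ∈ antidiagonal n,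
      (coeff p.1) (d⁄dX ℚ treeFun) * (coeff p.2) (expOf treeFun)
      = ∑ k ∈ range (n+1), (coeff p.1) (d⁄dX ℚ treeFun) *
          ((coeff p.2) (treeFun ^ k) / ((k.factorial:ℕ):ℚ)) := by
    intro p hp
    rw [coeff_expOf, Finset.mul_sum]
    apply Finset.sum_subset
    · have := Finset.HasAntidiagonal.antidiagonal.snd_le hp
      intro x hx
      rw [mem_range] at *
      omega
    · intro x hx hnx
      rw [mem_range] at hx hnx
      rw [coeff_treeFun_pow_eq_zero (by omega), zero_div, mul_zero]
  rw [Finset.sum_congr rfl hR, Finset.sum_comm]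
  apply Finset.sum_congr rfl
  intro k hk
  rw [PowerSeries.coeff_mul, Finset.sum_div]
  apply Finset.sum_congr rfl
  intro p hp
  rw [mul_div_assoc]

lemma coeff_exp_zero : coeff 0 (expOf treeFun) = 1 := by
  rw [coeff_expOf]
  simp

lemma hDXE : d⁄dX ℚ (PowerSeries.X * expOf treeFun)
    = PowerSeries.X * (d⁄dX ℚ treeFun * expOf treeFun) + expOf treeFun := by
  rw [Derivation.leibniz, derivative_X, deriv_expOf, smul_eq_mul, smul_eq_mul, mul_one]

lemma hW : PowerSeries.X * ((1 - treeFun) *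
      d⁄dX ℚ (PowerSeries.X * expOf treeFun - treeFun))
    = PowerSeries.X * expOf treeFun - treeFun := by
  rw [map_sub, hDXE]
  linear_combination (PowerSeries.X * expOf treeFun - 1) * fun_eq

/-- The tree function satisfies the functional equation `x · exp(T(x)) = T(x)`. -/
theorem tree_function_equation : PowerSeries.X * expOf treeFun = treeFun := by
  rw [← sub_eq_zero]
  have hall : ∀ n, (coeff n) (PowerSeries.X * expOf treeFun - treeFun) = 0 := by
    intro n
    induction n using Nat.strong_induction_on with
    | _ n IH =>
      obtain _|_|m := n
      · rw [map_sub]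
        have h1 : (coeff 0) (PowerSeries.X * expOf treeFun) = 0 := by
          rw [PowerSeries.coeff_zero_eq_constantCoeff, map_mul, constantCoeff_X, zero_mul]
        have h2 : (coeff 0) treeFun = 0 := by
          rw [treeFun, coeff_mk]
          simp
        rw [h1, h2, sub_zero]
      · rw [map_sub]
        rw [coeff_succ_X_mul, coeff_exp_zero]
        rw [treeFun, coeff_mk, if_neg (by omega)]
        norm_num
      · have hcoeff := congrArg (coeff (m+2)) hW
        rw [coeff_succ_X_mul, sub_mul, one_mul, map_sub, coeff_derivative,
          PowerSeries.coeff_mul, Finset.Nat.sum_antidiagonal_eq_sum_range_succ_mk] at hcoeff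
        have hsum : ∑ i ∈ range (m+1+1), (coeff i) treeFun *
            (coeff (m+1-i)) (d⁄dX ℚ (PowerSeries.X * expOf treeFun - treeFun)) = 0 := by
          apply Finset.sum_eq_zero
          intro i hi
          rcases Nat.eq_zero_or_pos i with h|h
          · subst h
            rw [treeFun, coeff_mk, if_pos rfl, zero_mul]
          · rw [coeff_derivative, IH (m+1-i+1) (by omega), zero_mul, mul_zero]
        rw [hsum, sub_zero] at hcoeff
        have h9 : (coeff (m+2)) (PowerSeries.X * expOf treeFun - treeFun) * ((m+1:ℕ):ℚ) = 0 := by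
          push_cast at hcoeff ⊢
          linear_combination hcoeff
        rcases mul_eq_zero.mp h9 with h|h
        · exact h
        · exact absurd h (by positivity)
  ext n
  rw [hall n, map_zero]
end

section
/- For the tree function T(x) = ∑_{n ≥ 1} (n^{n-1}/n!) x^n and any scalar t, one has exp(t·T(x)) = ∑_{n ≥ 0} (t(t+n)^{n-1}/n!) x^n as formal power series (with the n = 0 term equal to 1). -/
open PowerSeries Finset

/-- Closed form for `coeff n (treeFun ^ k)`. -/
noncomputable def tc (n k : ℕ) : ℚ :=
  if k = 0 then (if n = 0 then 1 else 0)
  else if n < k then 0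
  else (k : ℚ) * (n : ℚ) ^ (n - k) / ((n : ℚ) * ((n - k).factorial : ℚ))

lemma coeff_pow_eq_zero {f : PowerSeries ℚ} (hf : constantCoeff f = 0) {a i : ℕ}
    (h : i < a) : PowerSeries.coeff i (f ^ a) = 0 := by
  have : (X : PowerSeries ℚ) ^ a ∣ f ^ a :=
    pow_dvd_pow_of_dvd (PowerSeries.X_dvd_iff.mpr hf) a
  exact PowerSeries.X_pow_dvd_iff.mp this i h

lemma coeff_mul_pow_eq_zero {f g : PowerSeries ℚ} (hf : constantCoeff f = 0)
    (hg : constantCoeff g = 0) {a b n : ℕ} (h : n < a + b) :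
    PowerSeries.coeff n (f ^ a * g ^ b) = 0 := by
  have : (X : PowerSeries ℚ) ^ (a + b) ∣ f ^ a * g ^ b := by
    rw [pow_add]
    exact mul_dvd_mul (pow_dvd_pow_of_dvd (PowerSeries.X_dvd_iff.mpr hf) a)
      (pow_dvd_pow_of_dvd (PowerSeries.X_dvd_iff.mpr hg) b)
  exact PowerSeries.X_pow_dvd_iff.mp this n h


lemma sum_tri (n : ℕ) (F : ℕ → ℕ → ℚ) (hF : ∀ a b, n < a + b → F a b = 0) :
    ∑ k ∈ range (n + 1), ∑ a ∈ range (k + 1), F a (k - a)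
      = ∑ a ∈ range (n + 1), ∑ b ∈ range (n + 1), F a b := by
  have h1 : ∀ k, ∑ a ∈ range (k + 1), F a (k - a)
      = ∑ p ∈ Finset.HasAntidiagonal.antidiagonal k, F p.1 p.2 := fun k =>
    (Finset.Nat.sum_antidiagonal_eq_sum_range_succ_mk (fun p => F p.1 p.2) k).symm
  simp_rw [h1]
  rw [← Finset.sum_biUnion]
  · rw [← Finset.sum_product']
    apply Finset.sum_subset
    · intro p hp
      simp only [Finset.mem_biUnion, Finset.mem_range, Finset.HasAntidiagonal.mem_antidiagonal] at hp
      obtain ⟨k, hk, hpk⟩ := hp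
      simp only [Finset.mem_product, Finset.mem_range]
      omega
    · intro p hp hnp
      apply hF
      simp only [Finset.mem_biUnion, Finset.mem_range, Finset.HasAntidiagonal.mem_antidiagonal] at hnp
      by_contra hc
      exact hnp ⟨p.1 + p.2, by omega, rfl⟩
  · intro x _ y _ hxy
    simp only [Finset.disjoint_left, Finset.HasAntidiagonal.mem_antidiagonal]
    intro p hpx hpy
    omega

lemma expOf_mul {f g : PowerSeries ℚ} (hf : constantCoeff f = 0)
    (hg : constantCoeff g = 0) :
    expOf (f + g) = expOf f * expOf g := by
  ext n
  set F : ℕ → ℕ → ℚ := fun a b =>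
    PowerSeries.coeff n (f ^ a * g ^ b) / ((a.factorial : ℚ) * (b.factorial : ℚ)) with hFdef
  have hF0 : ∀ a b, n < a + b → F a b = 0 := fun a b h => by
    simp [hFdef, coeff_mul_pow_eq_zero hf hg h]
  have sideA : PowerSeries.coeff n (expOf (f + g))
      = ∑ a ∈ range (n + 1), ∑ b ∈ range (n + 1), F a b := by
    rw [expOf, coeff_mk, ← sum_tri n F hF0]
    refine Finset.sum_congr rfl fun k _ => ?_
    rw [add_pow, map_sum, Finset.sum_div]
    refine Finset.sum_congr rfl fun a ha => ?_
    rw [Finset.mem_range] at ha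
    have ha' : a ≤ k := Nat.lt_succ_iff.mp ha
    have hcast : ((k.choose a : ℕ) : PowerSeries ℚ) = PowerSeries.C ((k.choose a : ℕ) : ℚ) := by
      simp
    rw [hcast, PowerSeries.coeff_mul_C, hFdef]
    have hfact : ((k.choose a : ℕ) : ℚ) * (a.factorial : ℚ) * ((k - a).factorial : ℚ)
        = (k.factorial : ℚ) := by
      exact_mod_cast congrArg (Nat.cast : ℕ → ℚ) (Nat.choose_mul_factorial_mul_factorial ha')
    have h1 : (a.factorial : ℚ) ≠ 0 := Nat.cast_ne_zero.mpr a.factorial_ne_zero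
    have h2 : ((k - a).factorial : ℚ) ≠ 0 := Nat.cast_ne_zero.mpr (k - a).factorial_ne_zero
    have h3 : (k.factorial : ℚ) ≠ 0 := Nat.cast_ne_zero.mpr k.factorial_ne_zero
    field_simp
    linear_combination (PowerSeries.coeff n (f ^ a * g ^ (k - a))) * hfact
  have hextf : ∀ i ≤ n, PowerSeries.coeff i (expOf f)
      = ∑ a ∈ range (n + 1), PowerSeries.coeff i (f ^ a) / (a.factorial : ℚ) := by
    intro i hi
    rw [expOf, coeff_mk]
    apply Finset.sum_subset (Finset.range_subset_range.mpr (by omega))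
    intro a _ hna
    rw [Finset.mem_range, not_lt] at hna
    rw [coeff_pow_eq_zero hf (by omega), zero_div]
  have hextg : ∀ i ≤ n, PowerSeries.coeff i (expOf g)
      = ∑ b ∈ range (n + 1), PowerSeries.coeff i (g ^ b) / (b.factorial : ℚ) := by
    intro i hi
    rw [expOf, coeff_mk]
    apply Finset.sum_subset (Finset.range_subset_range.mpr (by omega))
    intro b _ hnb
    rw [Finset.mem_range, not_lt] at hnb
    rw [coeff_pow_eq_zero hg (by omega), zero_div]
  have sideB : PowerSeries.coeff n (expOf f * expOf g)
      = ∑ a ∈ range (n + 1), ∑ b ∈ range (n + 1), F a b := by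
    rw [PowerSeries.coeff_mul]
    have step : ∀ p ∈ Finset.HasAntidiagonal.antidiagonal n,
        PowerSeries.coeff p.1 (expOf f) * PowerSeries.coeff p.2 (expOf g)
        = ∑ a ∈ range (n + 1), ∑ b ∈ range (n + 1),
            (PowerSeries.coeff p.1 (f ^ a) / (a.factorial : ℚ))
              * (PowerSeries.coeff p.2 (g ^ b) / (b.factorial : ℚ)) := by
      intro p hp
      rw [Finset.HasAntidiagonal.mem_antidiagonal] at hp
      rw [hextf p.1 (by omega), hextg p.2 (by omega), Finset.sum_mul_sum]
    rw [Finset.sum_congr rfl step, Finset.sum_comm]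
    refine Finset.sum_congr rfl fun a _ => ?_
    rw [Finset.sum_comm]
    refine Finset.sum_congr rfl fun b _ => ?_
    have hF : F a b = PowerSeries.coeff n (f ^ a * g ^ b)
        / ((a.factorial : ℚ) * (b.factorial : ℚ)) := rfl
    rw [hF, PowerSeries.coeff_mul, Finset.sum_div]
    refine Finset.sum_congr rfl fun p _ => ?_
    rw [div_mul_div_comm]
  rw [sideA, sideB]

lemma sumS (m : ℕ) (u : ℚ) :
    ∑ j ∈ range (m + 1), u ^ j * tc m j / (j.factorial : ℚ)
      = if m = 0 then 1 else u * (u + (m : ℚ)) ^ (m - 1) / (m.factorial : ℚ) := by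
  rcases Nat.eq_zero_or_pos m with hm | hm
  · subst hm
    simp [tc]
  · have hm0 : m ≠ 0 := hm.ne'
    rw [if_neg hm0, Finset.sum_range_succ']
    have h0 : u ^ 0 * tc m 0 / ((0:ℕ).factorial : ℚ) = 0 := by simp [tc, hm0]
    rw [h0, add_zero]
    have hmQ : (m : ℚ) ≠ 0 := Nat.cast_ne_zero.mpr hm0
    -- binomial expansion of (u + m)^(m-1)
    have hb : (u + (m : ℚ)) ^ (m - 1)
        = ∑ i ∈ range m, u ^ i * (m : ℚ) ^ (m - 1 - i) * ((m-1).choose i : ℚ) := by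
      rw [add_pow]
      rw [Nat.sub_add_cancel hm]
    rw [hb, Finset.mul_sum, Finset.sum_div]
    refine Finset.sum_congr rfl fun i hi => ?_
    rw [Finset.mem_range] at hi
    have hik : i ≤ m - 1 := by omega
    have htc : tc m (i + 1) = ((i:ℚ) + 1) * (m : ℚ) ^ (m - (i + 1))
        / ((m : ℚ) * ((m - (i + 1)).factorial : ℚ)) := by
      rw [tc, if_neg (by omega), if_neg (by omega)]
      push_cast
      ring
    have he : m - (i + 1) = m - 1 - i := by omega
    rw [htc, he]
    have hC : (((m-1).choose i : ℕ) : ℚ) * (i.factorial : ℚ) * ((m - 1 - i).factorial : ℚ)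
        = ((m-1).factorial : ℚ) := by
      exact_mod_cast congrArg (Nat.cast : ℕ → ℚ) (Nat.choose_mul_factorial_mul_factorial hik)
    have hmf : (m.factorial : ℚ) = (m : ℚ) * ((m-1).factorial : ℚ) := by
      exact_mod_cast (congrArg (Nat.cast : ℕ → ℚ) (Nat.mul_factorial_pred hm0)).symm
    have hif : (((i+1).factorial : ℕ) : ℚ) = ((i:ℚ) + 1) * (i.factorial : ℚ) := by
      rw [Nat.factorial_succ]; push_cast; ring
    have h1 : (i.factorial : ℚ) ≠ 0 := Nat.cast_ne_zero.mpr i.factorial_ne_zero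
    have h2 : ((m - 1 - i).factorial : ℚ) ≠ 0 := Nat.cast_ne_zero.mpr (m-1-i).factorial_ne_zero
    have h3 : ((m-1).factorial : ℚ) ≠ 0 := Nat.cast_ne_zero.mpr (m-1).factorial_ne_zero
    have h4 : ((i:ℚ) + 1) ≠ 0 := by positivity
    rw [hif, hmf, pow_succ]
    field_simp
    rw [← hC]
    ring

lemma constantCoeff_tree : constantCoeff treeFun = 0 := by
  rw [← PowerSeries.coeff_zero_eq_constantCoeff_apply, treeFun, coeff_mk]
  simp

lemma coeff_pow_congr {f g : PowerSeries ℚ} {n : ℕ}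
    (h : ∀ m ≤ n, PowerSeries.coeff m f = PowerSeries.coeff m g) (k : ℕ) :
    ∀ n' ≤ n, PowerSeries.coeff n' (f ^ k) = PowerSeries.coeff n' (g ^ k) := by
  induction k with
  | zero => intro n' _; simp
  | succ k IHk =>
    intro n' hn'
    rw [pow_succ, pow_succ, PowerSeries.coeff_mul, PowerSeries.coeff_mul]
    refine Finset.sum_congr rfl fun p hp => ?_
    rw [Finset.HasAntidiagonal.mem_antidiagonal] at hp
    rw [IHk p.1 (by omega), h p.2 (by omega)]

lemma constantCoeff_smul_tree (K : ℕ) : constantCoeff (K • treeFun) = 0 := by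
  rw [map_nsmul, constantCoeff_tree, smul_zero]

lemma expOf_pow (K : ℕ) : (expOf treeFun) ^ (K + 1) = expOf ((K + 1) • treeFun) := by
  induction K with
  | zero => simp
  | succ K IHK =>
    rw [pow_succ, IHK, ← expOf_mul (constantCoeff_smul_tree (K+1)) constantCoeff_tree,
      ← succ_nsmul]

lemma coeff_tree_pow (n k : ℕ) : PowerSeries.coeff n (treeFun ^ k) = tc n k := by
  induction n using Nat.strong_induction_on generalizing k with
  | _ n IH =>
    match k with
    | 0 => simp [tc, PowerSeries.coeff_one]
    | K + 1 =>
      by_cases hnk : n < K + 1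
      · rw [coeff_pow_eq_zero constantCoeff_tree hnk, tc, if_neg (by omega), if_pos hnk]
      · push_neg at hnk
        have hn1 : 1 ≤ n := le_trans (by omega) hnk
        have hV : ∀ m ≤ n, PowerSeries.coeff m treeFun
            = PowerSeries.coeff m (X * expOf treeFun) := by
          intro m hm
          match m with
          | 0 =>
            simp only [PowerSeries.coeff_zero_eq_constantCoeff_apply]
            rw [map_mul, PowerSeries.constantCoeff_X, zero_mul, constantCoeff_tree]
          | m' + 1 =>
            rw [PowerSeries.coeff_succ_X_mul, expOf, coeff_mk]
            have hsum : ∑ j ∈ range (m' + 1), (PowerSeries.coeff m' (treeFun ^ j)) / (j.factorial : ℚ)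
                = ∑ j ∈ range (m' + 1), (1:ℚ) ^ j * tc m' j / (j.factorial : ℚ) := by
              refine Finset.sum_congr rfl fun j _ => ?_
              rw [IH m' (by omega) j, one_pow, one_mul]
            rw [hsum, sumS m' 1, treeFun, coeff_mk, if_neg (Nat.succ_ne_zero m'),
              Nat.add_sub_cancel]
            rcases Nat.eq_zero_or_pos m' with h0 | hpos
            · subst h0; norm_num
            · rw [if_neg hpos.ne']
              have h3 : ((m' + 1).factorial : ℚ) = ((m':ℚ) + 1) * (m'.factorial : ℚ) := by
                rw [Nat.factorial_succ]; push_cast; ring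
              have h2 : ((m' + 1 : ℕ) : ℚ) = (m' : ℚ) + 1 := by push_cast; ring
              have h5 : ((m':ℚ) + 1) ^ m' = ((m':ℚ) + 1) ^ (m' - 1) * ((m':ℚ) + 1) := by
                rw [← pow_succ]; congr 1; omega
              rw [h3, h2, h5]
              have h6 : ((m':ℚ) + 1) ≠ 0 := by positivity
              have h7 : (m'.factorial : ℚ) ≠ 0 := Nat.cast_ne_zero.mpr m'.factorial_ne_zero
              have h8 : (1:ℚ) + (m':ℚ) = (m':ℚ) + 1 := by ring
              rw [h8]
              field_simp
        have key := coeff_pow_congr hV (K + 1) n le_rfl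
        obtain ⟨m, hn⟩ : ∃ m, n = m + (K + 1) := ⟨n - (K + 1), by omega⟩
        have hsum : ∑ j ∈ range (m + 1), (PowerSeries.coeff m (((K+1) • treeFun) ^ j)) / (j.factorial : ℚ)
            = ∑ j ∈ range (m + 1), ((K:ℚ)+1) ^ j * tc m j / (j.factorial : ℚ) := by
          refine Finset.sum_congr rfl fun j _ => ?_
          rw [smul_pow, map_nsmul, IH m (by omega) j, nsmul_eq_mul]
          push_cast
          ring
        have hcoe : PowerSeries.coeff n ((X:PowerSeries ℚ)^(K+1) * expOf ((K+1) • treeFun))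
            = PowerSeries.coeff m (expOf ((K+1) • treeFun)) := by
          conv_lhs => rw [hn]
          exact PowerSeries.coeff_X_pow_mul _ (K+1) m
        have hnQ : (n:ℚ) ≠ 0 := Nat.cast_ne_zero.mpr (by omega)
        have hKc : ((K + 1 : ℕ) : ℚ) = (K:ℚ) + 1 := by push_cast; ring
        have hms : n - (K + 1) = m := by omega
        have htcn : tc n (K + 1) = ((K:ℚ)+1) * (n:ℚ) ^ m / ((n:ℚ) * (m.factorial : ℚ)) := by
          rw [tc, if_neg (Nat.succ_ne_zero K), if_neg (not_lt.mpr hnk), hms, hKc]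
        rw [key, mul_pow, expOf_pow K, hcoe, expOf, coeff_mk, hsum, sumS m ((K:ℚ)+1), htcn]
        have hcast : ((K:ℚ)+1) + (m:ℚ) = (n:ℚ) := by rw [hn]; push_cast; ring
        rcases Nat.eq_zero_or_pos m with h0 | hpos
        · rw [if_pos h0, h0]
          have hnK : (n:ℚ) = (K:ℚ) + 1 := by rw [hn, h0]; push_cast; ring
          rw [hnK]
          have h6 : ((K:ℚ) + 1) ≠ 0 := by positivity
          simp [Nat.factorial]
          rw [div_self h6]
        · rw [if_neg hpos.ne', hcast]
          have h5 : (n : ℚ) ^ m = (n:ℚ) ^ (m - 1) * (n:ℚ) := by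
            rw [← pow_succ]; congr 1; omega
          rw [h5]
          have h7 : (m.factorial : ℚ) ≠ 0 := Nat.cast_ne_zero.mpr m.factorial_ne_zero
          field_simp

/-- `exp(t·T(x)) = ∑_{n ≥ 0} t(t+n)^{n-1} x^n / n!`, with the `n = 0` term equal to `1`. -/
theorem exp_t_tree (t : ℚ) :
    expOf (PowerSeries.C t * treeFun) =
      PowerSeries.mk fun n =>
        if n = 0 then 1 else t * (t + (n : ℚ)) ^ (n - 1) / (n.factorial : ℚ) := by
  ext n
  rw [expOf, coeff_mk, coeff_mk]
  have key : ∀ k, PowerSeries.coeff n ((PowerSeries.C t * treeFun) ^ k)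
      = t ^ k * tc n k := by
    intro k
    rw [mul_pow, ← map_pow, PowerSeries.coeff_C_mul, coeff_tree_pow]
  calc ∑ k ∈ range (n + 1), PowerSeries.coeff n ((PowerSeries.C t * treeFun) ^ k) / (k.factorial : ℚ)
      = ∑ k ∈ range (n + 1), t ^ k * tc n k / (k.factorial : ℚ) := by
        exact Finset.sum_congr rfl fun k _ => by rw [key]
    _ = _ := sumS n t
end

section
/- For any scalar t, integer k ≥ 0, and the tree function T(x), the formal power series identity holds: ∑_{l ≥ k} (-t·T(x))^l / (k!(l-k)!) = ((-1)^k/k!) t^k ∑_{n ≥ 0} (k - t)(k - t + n)^{n-1} x^{n+k} / n!. -/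
open PowerSeries Finset

namespace TreeAux

def g (s : ℚ) (n : ℕ) : ℚ := if n = 0 then 1 else s * (s + n) ^ (n - 1)

@[simp] lemma g_zero (s : ℚ) : g s 0 = 1 := rfl

lemma g_pos (s : ℚ) {n : ℕ} (h : n ≠ 0) : g s n = s * (s + n) ^ (n - 1) := if_neg h

lemma alt_sum_pow (d : ℕ) : ∀ n : ℕ, d < n →
    ∑ k ∈ range (n + 1), (-1 : ℚ) ^ k * (n.choose k : ℚ) * (k : ℚ) ^ d = 0 := by
  induction d using Nat.strong_induction_on with
  | _ d ih =>
    intro n hdn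
    match d with
    | 0 =>
      have h0 := add_pow (-1 : ℚ) 1 n
      rw [neg_add_cancel, zero_pow hdn.ne'] at h0
      calc ∑ k ∈ range (n + 1), (-1 : ℚ) ^ k * (n.choose k : ℚ) * (k : ℚ) ^ 0
          = ∑ k ∈ range (n + 1), (-1 : ℚ) ^ k * (1 : ℚ) ^ (n - k) * (n.choose k : ℚ) := by
            apply sum_congr rfl; intro k _; simp
        _ = 0 := h0.symm
    | (d + 1) =>
      obtain ⟨m, rfl⟩ : ∃ m, n = m + 1 := ⟨n - 1, by omega⟩
      have hdm : d < m := by omega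
      rw [Finset.sum_range_succ']
      have h0 : (-1 : ℚ) ^ 0 * (((m + 1).choose 0 : ℕ) : ℚ) * ((0 : ℕ) : ℚ) ^ (d + 1) = 0 := by
        simp
      rw [h0, add_zero]
      have hsum : ∑ i ∈ range (m + 1),
          (-1 : ℚ) ^ i * ((m.choose i : ℚ) * ((i : ℚ) + 1) ^ d) = 0 := by
        have hrw : ∀ i ∈ range (m + 1),
            (-1 : ℚ) ^ i * ((m.choose i : ℚ) * ((i : ℚ) + 1) ^ d)
            = ∑ e ∈ range (d + 1), (1 : ℚ) ^ (d - e) * (d.choose e : ℚ) *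
                ((-1 : ℚ) ^ i * (m.choose i : ℚ) * (i : ℚ) ^ e) := by
          intro i _
          rw [add_pow, mul_sum, mul_sum]
          exact sum_congr rfl fun e _ => by ring
        rw [sum_congr rfl hrw, sum_comm]
        apply sum_eq_zero
        intro e he
        have he' := mem_range.mp he
        rw [← mul_sum, ih e (by omega) m (by omega), mul_zero]
      have hterm : ∀ i ∈ range (m + 1),
          (-1 : ℚ) ^ (i + 1) * (((m + 1).choose (i + 1) : ℕ) : ℚ) * (((i + 1 : ℕ)) : ℚ) ^ (d + 1)
          = (-((m : ℚ) + 1)) * ((-1 : ℚ) ^ i * ((m.choose i : ℚ) * ((i : ℚ) + 1) ^ d)) := by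
        intro i _
        have hc : (((m + 1 : ℕ)) : ℚ) * (m.choose i : ℚ)
            = (((m + 1).choose (i + 1) : ℕ) : ℚ) * (((i + 1 : ℕ)) : ℚ) := by
          exact_mod_cast congrArg (Nat.cast : ℕ → ℚ) (Nat.add_one_mul_choose_eq m i)
        push_cast at hc ⊢
        linear_combination (-(-1 : ℚ) ^ (i + 1) * ((i : ℚ) + 1) ^ d) * hc
      rw [sum_congr rfl hterm, ← mul_sum, hsum, mul_zero]

lemma finite_diff (x : ℚ) (d n : ℕ) (h : d < n) :
    ∑ k ∈ range (n + 1), (-1 : ℚ) ^ k * (n.choose k : ℚ) * (x + (k : ℚ)) ^ d = 0 := by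
  have hrw : ∀ k ∈ range (n + 1),
      (-1 : ℚ) ^ k * (n.choose k : ℚ) * (x + (k : ℚ)) ^ d
      = ∑ e ∈ range (d + 1), x ^ e * (d.choose e : ℚ) *
          ((-1 : ℚ) ^ k * (n.choose k : ℚ) * (k : ℚ) ^ (d - e)) := by
    intro k _
    rw [add_pow, mul_sum]
    exact sum_congr rfl fun e _ => by ring
  rw [sum_congr rfl hrw, sum_comm]
  apply sum_eq_zero
  intro e _
  rw [← mul_sum, alt_sum_pow (d - e) n (by omega), mul_zero]

lemma abelB : ∀ n : ℕ, ∀ x y : ℚ,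
    ∑ k ∈ range (n + 1), (n.choose k : ℚ) * g x k * (y + ((n - k : ℕ) : ℚ)) ^ (n - k)
      = (x + y + (n : ℚ)) ^ n := by
  intro n
  induction n with
  | zero => intro x y; simp
  | succ n ih =>
    intro x y
    set P : Polynomial ℚ := ∑ k ∈ range (n + 2),
      Polynomial.C (((n + 1).choose k : ℚ) * g x k) *
        (Polynomial.X + Polynomial.C (((n + 1 - k : ℕ) : ℚ))) ^ (n + 1 - k) with hP
    set Q : Polynomial ℚ := (Polynomial.X + Polynomial.C (x + ((n : ℚ) + 1))) ^ (n + 1) with hQ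
    -- the common derivative
    have hRpoly : ∑ k ∈ range (n + 1),
        Polynomial.C ((n.choose k : ℚ) * g x k) *
          (Polynomial.X + Polynomial.C (((n + 1 - k : ℕ) : ℚ))) ^ (n - k)
        = (Polynomial.X + Polynomial.C (x + ((n : ℚ) + 1))) ^ n := by
      apply Polynomial.funext
      intro r
      rw [Polynomial.eval_finset_sum]
      have : ∀ k ∈ range (n + 1),
          Polynomial.eval r (Polynomial.C ((n.choose k : ℚ) * g x k) *
            (Polynomial.X + Polynomial.C (((n + 1 - k : ℕ) : ℚ))) ^ (n - k))
          = (n.choose k : ℚ) * g x k * ((r + 1) + ((n - k : ℕ) : ℚ)) ^ (n - k) := by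
        intro k hk
        have hk' := mem_range.mp hk
        have hc : ((n + 1 - k : ℕ) : ℚ) = ((n - k : ℕ) : ℚ) + 1 := by
          have : n + 1 - k = (n - k) + 1 := by omega
          rw [this]; push_cast; ring
        simp only [Polynomial.eval_mul, Polynomial.eval_C, Polynomial.eval_pow,
          Polynomial.eval_add, Polynomial.eval_X, hc]
        ring
      rw [sum_congr rfl this, ih x (r + 1)]
      simp
      ring
    have hder : Polynomial.derivative (P - Q) = 0 := by
      rw [map_sub]
      have hdP : Polynomial.derivative P
          = Polynomial.C (((n + 1 : ℕ) : ℚ)) *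
            ∑ k ∈ range (n + 1), Polynomial.C ((n.choose k : ℚ) * g x k) *
              (Polynomial.X + Polynomial.C (((n + 1 - k : ℕ) : ℚ))) ^ (n - k) := by
        rw [hP, Polynomial.derivative_sum, mul_sum]
        rw [Finset.sum_range_succ]
        have hlast : Polynomial.derivative
            (Polynomial.C (((n + 1).choose (n + 1) : ℚ) * g x (n + 1)) *
              (Polynomial.X + Polynomial.C (((n + 1 - (n + 1) : ℕ) : ℚ))) ^ (n + 1 - (n + 1)))
            = 0 := by
          simp
        rw [hlast, add_zero]
        apply sum_congr rfl
        intro k hk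
        have hk' := mem_range.mp hk
        have he : n + 1 - k - 1 = n - k := by omega
        have h2 : (n.choose k) * (n + 1) = (n + 1).choose k * (n + 1 - k) :=
          Nat.choose_mul_succ_eq n k
        have h3 : ((n.choose k : ℚ)) * ((n + 1 : ℕ) : ℚ)
            = (((n + 1).choose k : ℚ)) * ((n + 1 - k : ℕ) : ℚ) := by
          exact_mod_cast congrArg (Nat.cast : ℕ → ℚ) h2
        have hscalar : (((n + 1).choose k : ℚ) * g x k) * ((n + 1 - k : ℕ) : ℚ)
            = ((n + 1 : ℕ) : ℚ) * ((n.choose k : ℚ) * g x k) := by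
          linear_combination (- g x k) * h3
        have hC := congrArg (Polynomial.C : ℚ → Polynomial ℚ) hscalar
        simp only [map_mul] at hC
        rw [Polynomial.derivative_C_mul, Polynomial.derivative_pow,
          Polynomial.derivative_X_add_C, he, mul_one]
        simp only [map_mul]
        linear_combination
          ((Polynomial.X + Polynomial.C (((n + 1 - k : ℕ)) : ℚ)) ^ (n - k)) * hC
      have hdQ : Polynomial.derivative Q
          = Polynomial.C (((n + 1 : ℕ) : ℚ)) *
            (Polynomial.X + Polynomial.C (x + ((n : ℚ) + 1))) ^ n := by
        rw [hQ, Polynomial.derivative_pow, Polynomial.derivative_X_add_C]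
        simp
      rw [hdP, hdQ, hRpoly, sub_self]
    have hconst := Polynomial.eq_C_of_derivative_eq_zero hder
    -- evaluate at y₀ = -(x + n + 1)
    have heval0 : Polynomial.eval (-(x + ((n : ℚ) + 1))) (P - Q) = 0 := by
      rw [Polynomial.eval_sub]
      have hQ0 : Polynomial.eval (-(x + ((n : ℚ) + 1))) Q = 0 := by
        rw [hQ]; simp
      have hP0 : Polynomial.eval (-(x + ((n : ℚ) + 1))) P = 0 := by
        rw [hP, Polynomial.eval_finset_sum]
        have hterm : ∀ k ∈ range (n + 2),
            Polynomial.eval (-(x + ((n : ℚ) + 1)))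
              (Polynomial.C (((n + 1).choose k : ℚ) * g x k) *
                (Polynomial.X + Polynomial.C (((n + 1 - k : ℕ) : ℚ))) ^ (n + 1 - k))
            = ((-1 : ℚ) ^ (n + 1) * x) *
              ((-1 : ℚ) ^ k * ((n + 1).choose k : ℚ) * (x + (k : ℚ)) ^ n) := by
          intro k hk
          have hk' := mem_range.mp hk
          have hbase : -(x + ((n : ℚ) + 1)) + ((n + 1 - k : ℕ) : ℚ) = -(x + (k : ℚ)) := by
            have : ((n + 1 - k : ℕ) : ℚ) = ((n : ℚ) + 1) - (k : ℚ) := by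
              have hle : k ≤ n + 1 := by omega
              push_cast [Nat.cast_sub hle]; ring
            rw [this]; ring
          simp only [Polynomial.eval_mul, Polynomial.eval_C, Polynomial.eval_pow,
            Polynomial.eval_add, Polynomial.eval_X, hbase]
          have hsgn : (-(x + (k : ℚ))) ^ (n + 1 - k) = (-1 : ℚ) ^ (n + 1 - k) * (x + (k : ℚ)) ^ (n + 1 - k) := by
            rw [neg_pow]
          have hneg : (-1 : ℚ) ^ (n + 1 - k) = (-1 : ℚ) ^ (n + 1) * (-1 : ℚ) ^ k := by
            have h1 : (-1 : ℚ) ^ (n + 1 - k) * (-1 : ℚ) ^ k = (-1 : ℚ) ^ (n + 1) := by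
              rw [← pow_add, Nat.sub_add_cancel (by omega)]
            have h2 : ((-1 : ℚ) ^ k) * ((-1 : ℚ) ^ k) = 1 := by
              rw [← pow_add, ← two_mul, pow_mul]; norm_num
            calc (-1 : ℚ) ^ (n + 1 - k) = (-1 : ℚ) ^ (n + 1 - k) * (((-1 : ℚ) ^ k) * ((-1 : ℚ) ^ k)) := by
                  rw [h2, mul_one]
              _ = ((-1 : ℚ) ^ (n + 1 - k) * (-1 : ℚ) ^ k) * (-1 : ℚ) ^ k := by ring
              _ = (-1 : ℚ) ^ (n + 1) * (-1 : ℚ) ^ k := by rw [h1]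
          have hgpow : g x k * (x + (k : ℚ)) ^ (n + 1 - k) = x * (x + (k : ℚ)) ^ n := by
            rcases Nat.eq_zero_or_pos k with rfl | hkpos
            · simp only [g_zero, Nat.cast_zero, add_zero, one_mul, Nat.sub_zero]
              rw [pow_succ']
            · rw [g_pos x (by omega)]
              rw [mul_assoc, ← pow_add]
              congr 2
              omega
          rw [hsgn, hneg]
          calc ((n + 1).choose k : ℚ) * g x k * ((-1 : ℚ) ^ (n + 1) * (-1 : ℚ) ^ k * (x + (k : ℚ)) ^ (n + 1 - k))
              = ((-1 : ℚ) ^ (n + 1) * (-1 : ℚ) ^ k * ((n + 1).choose k : ℚ)) * (g x k * (x + (k : ℚ)) ^ (n + 1 - k)) := by ring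
            _ = ((-1 : ℚ) ^ (n + 1) * (-1 : ℚ) ^ k * ((n + 1).choose k : ℚ)) * (x * (x + (k : ℚ)) ^ n) := by rw [hgpow]
            _ = ((-1 : ℚ) ^ (n + 1) * x) * ((-1 : ℚ) ^ k * ((n + 1).choose k : ℚ) * (x + (k : ℚ)) ^ n) := by ring
        rw [sum_congr rfl hterm, ← mul_sum, finite_diff x n (n + 1) (by omega), mul_zero]
      rw [hP0, hQ0, sub_self]
    have hPQ : P = Q := by
      have h0 : (P - Q).coeff 0 = 0 := by
        have := congrArg (Polynomial.eval (-(x + ((n : ℚ) + 1)))) hconst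
        rw [heval0, Polynomial.eval_C] at this
        exact this.symm
      have : P - Q = 0 := by rw [hconst, h0, map_zero]
      exact sub_eq_zero.mp this
    have hev := congrArg (Polynomial.eval y) hPQ
    rw [hP, hQ, Polynomial.eval_finset_sum] at hev
    simp only [Polynomial.eval_mul, Polynomial.eval_C, Polynomial.eval_pow,
      Polynomial.eval_add, Polynomial.eval_X] at hev
    rw [show x + y + ((n + 1 : ℕ) : ℚ) = y + (x + ((n : ℚ) + 1)) by push_cast; ring]
    rw [← hev]

lemma abel (s u : ℚ) (n : ℕ) :
    ∑ i ∈ range (n + 1), (n.choose i : ℚ) * g s i * g u (n - i) = g (s + u) n := by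
  match n with
  | 0 => simp
  | (m + 1) =>
    have key1 := abelB (m + 1) s u
    have key2 := abelB m s (u + 1)
    rw [Finset.sum_range_succ] at key1 ⊢
    have hsplit : ∀ i ∈ range (m + 1),
        ((m + 1).choose i : ℚ) * g s i * g u (m + 1 - i)
        = ((m + 1).choose i : ℚ) * g s i * (u + ((m + 1 - i : ℕ) : ℚ)) ^ (m + 1 - i)
          - ((m : ℚ) + 1) *
            ((m.choose i : ℚ) * g s i * ((u + 1) + ((m - i : ℕ) : ℚ)) ^ (m - i)) := by
      intro i hi
      have hi' := mem_range.mp hi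
      have h1 : m + 1 - i - 1 = m - i := by omega
      have hv : ((m + 1 - i : ℕ) : ℚ) = ((m - i : ℕ) : ℚ) + 1 := by
        have : m + 1 - i = (m - i) + 1 := by omega
        rw [this]; push_cast; ring
      have hv' : u + ((m + 1 - i : ℕ) : ℚ) = u + ((m - i : ℕ) : ℚ) + 1 := by rw [hv]; ring
      have hW2 : (u + 1) + ((m - i : ℕ) : ℚ) = u + ((m - i : ℕ) : ℚ) + 1 := by ring
      have hch2 : ((m + 1).choose i : ℚ) * (((m - i : ℕ) : ℚ) + 1)
          = ((m : ℚ) + 1) * (m.choose i : ℚ) := by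
        have h2 : (m.choose i) * (m + 1) = (m + 1).choose i * (m + 1 - i) :=
          Nat.choose_mul_succ_eq m i
        have h3 : ((m.choose i : ℚ)) * ((m + 1 : ℕ) : ℚ)
            = (((m + 1).choose i : ℚ)) * ((m + 1 - i : ℕ) : ℚ) := by
          exact_mod_cast congrArg (Nat.cast : ℕ → ℚ) h2
        rw [hv] at h3
        push_cast at h3 ⊢
        linarith
      rw [g_pos u (by omega : m + 1 - i ≠ 0), h1, hv', hW2,
        show m + 1 - i = (m - i) + 1 from by omega]
      linear_combination (- (g s i) * (u + ((m - i : ℕ) : ℚ) + 1) ^ (m - i)) * hch2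
    rw [sum_congr rfl hsplit, Finset.sum_sub_distrib, ← mul_sum, key2]
    have hlast1 : (((m + 1).choose (m + 1) : ℕ) : ℚ) * g s (m + 1) *
        (u + ((m + 1 - (m + 1) : ℕ) : ℚ)) ^ (m + 1 - (m + 1)) = g s (m + 1) := by
      simp
    rw [hlast1] at key1
    have hsum1 : ∑ i ∈ range (m + 1),
        ((m + 1).choose i : ℚ) * g s i * (u + ((m + 1 - i : ℕ) : ℚ)) ^ (m + 1 - i)
        = (s + u + ((m + 1 : ℕ) : ℚ)) ^ (m + 1) - g s (m + 1) := by linarith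
    rw [hsum1]
    have hlast2 : (((m + 1).choose (m + 1) : ℕ) : ℚ) * g s (m + 1) * g u (m + 1 - (m + 1))
        = g s (m + 1) := by simp
    rw [hlast2]
    rw [show s + (u + 1) + (m : ℚ) = s + u + (((m + 1 : ℕ)) : ℚ) from by push_cast; ring]
    rw [g_pos (s + u) (by omega : m + 1 ≠ 0), Nat.add_sub_cancel]
    push_cast
    ring

lemma key (c t : ℚ) (n : ℕ) :
    ∑ j ∈ range (n + 1), (n.choose j : ℚ) * (-t) ^ j * g (c + (j : ℚ)) (n - j)
      = g (c - t) n := by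
  match n with
  | 0 => simp
  | (m + 1) =>
    rw [Finset.sum_range_succ]
    have hlast : (((m + 1).choose (m + 1) : ℕ) : ℚ) * (-t) ^ (m + 1) *
        g (c + ((m + 1 : ℕ) : ℚ)) (m + 1 - (m + 1)) = (-t) ^ (m + 1) := by
      simp
    rw [hlast]
    have hgen : ∀ j ∈ range (m + 1),
        ((m + 1).choose j : ℚ) * (-t) ^ j * g (c + (j : ℚ)) (m + 1 - j)
        = ((m + 1).choose j : ℚ) *
            ((c + (j : ℚ)) * ((-t) ^ j * (c + ((m : ℚ) + 1)) ^ (m - j))) := by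
      intro j hj
      have hj' := mem_range.mp hj
      rw [g_pos _ (by omega : m + 1 - j ≠ 0),
        show m + 1 - j - 1 = m - j from by omega,
        show c + (j : ℚ) + ((m + 1 - j : ℕ) : ℚ) = c + ((m : ℚ) + 1) from by
          rw [Nat.cast_sub (by omega : j ≤ m + 1)]; push_cast; ring]
      ring
    rw [sum_congr rfl hgen]
    rw [g_pos (c - t) (by omega : m + 1 ≠ 0), Nat.add_sub_cancel,
      show c - t + ((m + 1 : ℕ) : ℚ) = -t + (c + ((m : ℚ) + 1)) from by push_cast; ring,
      add_pow, mul_sum]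
    have hR : ∀ i ∈ range (m + 1),
        (c - t) * ((-t) ^ i * (c + ((m : ℚ) + 1)) ^ (m - i) * (m.choose i : ℚ))
        = c * ((-t) ^ i * (c + ((m : ℚ) + 1)) ^ (m - i) * (m.choose i : ℚ))
          + (-t) ^ (i + 1) * (c + ((m : ℚ) + 1)) ^ (m - i) * (m.choose i : ℚ) := by
      intro i _; ring
    rw [sum_congr rfl hR, Finset.sum_add_distrib]
    have e1 := Finset.sum_range_succ' (fun j =>
      ((m + 1).choose j : ℚ) *
        ((c + (j : ℚ)) * ((-t) ^ j * (c + ((m : ℚ) + 1)) ^ (m - j)))) m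
    have e2 := Finset.sum_range_succ' (fun i =>
      c * ((-t) ^ i * (c + ((m : ℚ) + 1)) ^ (m - i) * (m.choose i : ℚ))) m
    have e3 := Finset.sum_range_succ (fun i =>
      (-t) ^ (i + 1) * (c + ((m : ℚ) + 1)) ^ (m - i) * (m.choose i : ℚ)) m
    have e4 : ∑ i ∈ range m, (((m + 1).choose (i + 1) : ℚ) *
          ((c + ((i + 1 : ℕ) : ℚ)) * ((-t) ^ (i + 1) * (c + ((m : ℚ) + 1)) ^ (m - (i + 1)))))
        = (∑ i ∈ range m,
            c * ((-t) ^ (i + 1) * (c + ((m : ℚ) + 1)) ^ (m - (i + 1)) * (m.choose (i + 1) : ℚ)))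
          + ∑ i ∈ range m,
            (-t) ^ (i + 1) * (c + ((m : ℚ) + 1)) ^ (m - i) * (m.choose i : ℚ) := by
      rw [← Finset.sum_add_distrib]
      apply sum_congr rfl
      intro i hi
      have hi' := mem_range.mp hi
      have A : (((m + 1).choose (i + 1) : ℕ) : ℚ)
          = ((m.choose i : ℕ) : ℚ) + ((m.choose (i + 1) : ℕ) : ℚ) := by
        exact_mod_cast congrArg (Nat.cast : ℕ → ℚ) (Nat.choose_succ_succ m i)
      have B : ((i : ℚ) + 1) * (((m + 1).choose (i + 1) : ℕ) : ℚ)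
          = ((m : ℚ) + 1) * ((m.choose i : ℕ) : ℚ) := by
        have hb : ((m + 1 : ℕ) : ℚ) * ((m.choose i : ℕ) : ℚ)
            = (((m + 1).choose (i + 1) : ℕ) : ℚ) * ((i + 1 : ℕ) : ℚ) := by
          exact_mod_cast congrArg (Nat.cast : ℕ → ℚ) (Nat.add_one_mul_choose_eq m i)
        push_cast at hb ⊢
        linarith
      rw [show m - i = (m - (i + 1)) + 1 from by omega]
      push_cast
      linear_combination
        ((-t) ^ (i + 1) * (c + ((m : ℚ) + 1)) ^ (m - (i + 1))) * (c * A + B)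
    have hf0 : ((m + 1).choose 0 : ℚ) *
        ((c + ((0 : ℕ) : ℚ)) * ((-t) ^ 0 * (c + ((m : ℚ) + 1)) ^ (m - 0)))
        = c * ((-t) ^ 0 * (c + ((m : ℚ) + 1)) ^ (m - 0) * (m.choose 0 : ℚ)) := by
      simp
    have htm : (-t) ^ (m + 1) * (c + ((m : ℚ) + 1)) ^ (m - m) * (m.choose m : ℚ)
        = (-t) ^ (m + 1) := by
      simp
    linarith [e1, e2, e3, e4, hf0, htm]

open PowerSeries

/-- The exponential-type series `E s = ∑ g s n xⁿ/n!` (this is `exp (s T)`). -/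
noncomputable def Es (s : ℚ) : PowerSeries ℚ :=
  PowerSeries.mk fun n => g s n / (n.factorial : ℚ)

@[simp] lemma coeff_Es (s : ℚ) (n : ℕ) :
    PowerSeries.coeff n (Es s) = g s n / (n.factorial : ℚ) :=
  PowerSeries.coeff_mk _ _

lemma Es_mul (s u : ℚ) : Es s * Es u = Es (s + u) := by
  ext n
  rw [PowerSeries.coeff_mul,
    Finset.Nat.sum_antidiagonal_eq_sum_range_succ_mk, coeff_Es, ← abel s u n, sum_div]
  apply sum_congr rfl
  intro i hi
  have hi' := mem_range.mp hi
  rw [coeff_Es, coeff_Es, Nat.cast_choose ℚ (by omega : i ≤ n)]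
  have h1 : (i.factorial : ℚ) ≠ 0 := by exact_mod_cast i.factorial_ne_zero
  have h2 : ((n - i).factorial : ℚ) ≠ 0 := by exact_mod_cast (n - i).factorial_ne_zero
  have h3 : (n.factorial : ℚ) ≠ 0 := by exact_mod_cast n.factorial_ne_zero
  field_simp

lemma Es_zero : Es 0 = 1 := by
  ext n
  rw [coeff_Es]
  match n with
  | 0 => simp
  | (m + 1) => simp [g_pos (0 : ℚ) (by omega : m + 1 ≠ 0)]

lemma treeFun_eq : treeFun = PowerSeries.X * Es 1 := by
  ext n
  match n with
  | 0 => simp [treeFun, PowerSeries.coeff_zero_X_mul]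
  | (m + 1) =>
    rw [PowerSeries.coeff_succ_X_mul, coeff_Es]
    simp only [treeFun, PowerSeries.coeff_mk, if_neg (Nat.succ_ne_zero m)]
    match m with
    | 0 => simp [g_zero]
    | (r + 1) =>
      rw [g_pos (1 : ℚ) (by omega : r + 1 ≠ 0)]
      have h1 : ((r + 2 : ℕ) : ℚ) ^ (r + 2 - 1) = ((r + 2 : ℕ) : ℚ) * ((r + 2 : ℕ) : ℚ) ^ (r + 1 - 1) := by
        rw [show r + 2 - 1 = (r + 1 - 1) + 1 from by omega, pow_succ']
      have h2 : ((r + 2).factorial : ℚ) = ((r + 2 : ℕ) : ℚ) * ((r + 1).factorial : ℚ) := by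
        exact_mod_cast congrArg (Nat.cast : ℕ → ℚ) (Nat.factorial_succ (r + 1))
      rw [h1, h2]
      have h3 : ((r + 2 : ℕ) : ℚ) ≠ 0 := by positivity
      have h4 : ((r + 1).factorial : ℚ) ≠ 0 := by exact_mod_cast (r + 1).factorial_ne_zero
      rw [mul_div_mul_left _ _ h3,
        show (1 : ℚ) + ((r + 1 : ℕ) : ℚ) = ((r + 2 : ℕ) : ℚ) from by push_cast; ring, one_mul]

lemma treeFun_pow (l : ℕ) : treeFun ^ l = PowerSeries.X ^ l * Es (l : ℚ) := by
  induction l with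
  | zero => simp [Es_zero]
  | succ l ih =>
    calc treeFun ^ (l + 1) = (PowerSeries.X ^ l * Es (l : ℚ)) * (PowerSeries.X * Es 1) := by
          rw [pow_succ, ih, treeFun_eq]
      _ = PowerSeries.X ^ (l + 1) * (Es (l : ℚ) * Es 1) := by ring
      _ = PowerSeries.X ^ (l + 1) * Es (((l + 1 : ℕ)) : ℚ) := by rw [Es_mul]; norm_num

end TreeAux

open TreeAux

/-- `∑_{l ≥ k} (-t·T(x))^l / (k!(l-k)!)
      = ((-1)^k/k!) t^k ∑_{n ≥ 0} (k-t)(k-t+n)^{n-1} x^{n+k}/n!`,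
where the sum on the left is computed coefficientwise (only the finitely many `l` with
`k ≤ l ≤ m` contribute to the coefficient of `x^m`, since `T` has zero constant term),
and the `n = 0` term on the right is interpreted as `(k-t)(k-t)^{-1} = 1`. -/
theorem sum_powers_tree (t : ℚ) (k : ℕ) :
    (PowerSeries.mk fun m => ∑ l ∈ Finset.Icc k m,
        (PowerSeries.coeff (R := ℚ) m ((-(PowerSeries.C (R := ℚ) t) * treeFun) ^ l)) /
          ((k.factorial : ℚ) * ((l - k).factorial : ℚ))) =
      PowerSeries.mk fun m =>
        if m < k then 0
        else if m = k then (-1) ^ k * t ^ k / (k.factorial : ℚ)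
        else (-1) ^ k / (k.factorial : ℚ) * t ^ k *
          (((k : ℚ) - t) * ((k : ℚ) - t + ((m - k : ℕ) : ℚ)) ^ (m - k - 1) /
            ((m - k).factorial : ℚ)) := by
  apply PowerSeries.ext
  intro m
  rw [PowerSeries.coeff_mk, PowerSeries.coeff_mk]
  have hterm : ∀ l, k ≤ l → l ≤ m →
      (PowerSeries.coeff (R := ℚ) m ((-(PowerSeries.C (R := ℚ) t) * treeFun) ^ l)) /
        ((k.factorial : ℚ) * ((l - k).factorial : ℚ))
      = (-t) ^ l * (g (l : ℚ) (m - l) / ((m - l).factorial : ℚ)) /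
          ((k.factorial : ℚ) * ((l - k).factorial : ℚ)) := by
    intro l hkl hlm
    congr 1
    rw [show -(PowerSeries.C (R := ℚ) t) = PowerSeries.C (R := ℚ) (-t) from (map_neg (PowerSeries.C (R := ℚ)) t).symm,
      mul_pow, ← map_pow, treeFun_pow, PowerSeries.coeff_C_mul,
      PowerSeries.coeff_X_pow_mul', if_pos hlm, coeff_Es]
  rcases lt_trichotomy m k with h1 | h2 | h3
  · rw [if_pos h1, Finset.Icc_eq_empty (by omega), Finset.sum_empty]
  · subst h2
    rw [if_neg (lt_irrefl m), if_pos rfl, Finset.Icc_self, Finset.sum_singleton,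
      hterm m le_rfl le_rfl]
    simp only [Nat.sub_self, g_zero, Nat.factorial_zero, Nat.cast_one, div_one, mul_one]
    rw [neg_pow]
  · rw [if_neg (by omega), if_neg (by omega)]
    rw [Finset.sum_congr rfl fun l hl =>
      hterm l (Finset.mem_Icc.mp hl).1 (Finset.mem_Icc.mp hl).2]
    rw [← Finset.Ico_add_one_right_eq_Icc, Finset.sum_Ico_eq_sum_range,
      show m + 1 - k = (m - k) + 1 from by omega]
    rw [show ((k : ℚ) - t) * ((k : ℚ) - t + ((m - k : ℕ) : ℚ)) ^ (m - k - 1)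
        = g ((k : ℚ) - t) (m - k) from (g_pos _ (by omega : m - k ≠ 0)).symm]
    rw [← key (k : ℚ) t (m - k), sum_div, mul_sum]
    apply sum_congr rfl
    intro j hj
    have hj' := mem_range.mp hj
    rw [show m - (k + j) = (m - k) - j from by omega,
      show k + j - k = j from by omega,
      Nat.cast_add, pow_add, Nat.cast_choose ℚ (by omega : j ≤ m - k)]
    have hne : ∀ r : ℕ, ((r.factorial : ℕ) : ℚ) ≠ 0 := fun r => by
      exact_mod_cast r.factorial_ne_zero
    have e1 := hne j
    have e2 := hne (m - k - j)
    have e3 := hne (m - k)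
    have e4 := hne k
    field_simp
    ring
end

section
/- The formal power series identity ln S(x) = ∑_{k > 0} (B_{2k} / (2k · (2k)!)) x^{2k} holds, where S(x) = sinh(x/2)/(x/2) and B_m are the Bernoulli numbers defined by x/(e^x - 1) = ∑_{m ≥ 0} B_m x^m / m!. -/
open PowerSeries Finset

/-- `S(x) = sinh(x/2)/(x/2) = ∑_{n≥0} x^{2n}/(4^n (2n+1)!)` as a formal power series. -/
noncomputable def Sser : PowerSeries ℚ :=
  PowerSeries.mk fun m => if m % 2 = 0 then 1 / ((4 : ℚ) ^ (m / 2) * ((m + 1).factorial : ℚ)) else 0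

/-- The series `∑_{k>0} B_{2k}/(2k·(2k)!) x^{2k}`. -/
noncomputable def Lser : PowerSeries ℚ :=
  PowerSeries.mk fun m =>
    if m = 0 ∨ m % 2 = 1 then 0 else bernoulli m / ((m : ℚ) * (m.factorial : ℚ))

lemma coeff_pow_zero {f : PowerSeries ℚ} (hf : constantCoeff f = 0) {k n : ℕ} (h : n < k) :
    PowerSeries.coeff n (f ^ k) = 0 :=
  X_pow_dvd_iff.mp (pow_dvd_pow_of_dvd (X_dvd_iff.mpr hf) k) n h

lemma coeff_mul_expOf {f : PowerSeries ℚ} (hf : constantCoeff f = 0) (g : PowerSeries ℚ) (n : ℕ) :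
    PowerSeries.coeff n (g * expOf f) =
      ∑ k ∈ Finset.range (n + 1), (PowerSeries.coeff n (g * f ^ k)) / (k.factorial : ℚ) := by
  rw [coeff_mul]
  simp only [expOf, coeff_mk]
  have h1 : ∀ p ∈ antidiagonal n,
      PowerSeries.coeff p.1 g * ∑ k ∈ range (p.2 + 1), PowerSeries.coeff p.2 (f ^ k) / (k.factorial : ℚ)
      = ∑ k ∈ range (n + 1), PowerSeries.coeff p.1 g * (PowerSeries.coeff p.2 (f ^ k) / (k.factorial : ℚ)) := by
    intro p hp
    rw [mul_sum]
    apply sum_subset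
    · intro k hk
      simp only [mem_range] at hk ⊢
      have := mem_antidiagonal.mp hp
      omega
    · intro k _ hk
      simp only [mem_range, not_lt] at hk
      rw [coeff_pow_zero hf (by omega)]
      simp
  rw [sum_congr rfl h1, sum_comm]
  refine sum_congr rfl fun k _ => ?_
  rw [coeff_mul, sum_div]
  exact sum_congr rfl fun p _ => (mul_div_assoc _ _ _).symm

lemma constantCoeff_expOf (f : PowerSeries ℚ) : constantCoeff (expOf f) = 1 := by
  rw [← coeff_zero_eq_constantCoeff_apply]
  simp [expOf]

lemma derivative_expOf {f : PowerSeries ℚ} (hf : constantCoeff f = 0) :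
    d⁄dX ℚ (expOf f) = d⁄dX ℚ f * expOf f := by
  ext n
  rw [coeff_derivative, coeff_mul_expOf hf]
  simp only [expOf, coeff_mk]
  rw [sum_mul, sum_range_succ']
  have h0 : PowerSeries.coeff (n + 1) (f ^ 0) / (Nat.factorial 0 : ℚ) * (n + 1 : ℚ) = 0 := by
    simp [coeff_one]
  rw [h0, add_zero]
  refine sum_congr rfl fun j hj => ?_
  have hd : PowerSeries.coeff (n + 1) (f ^ (j + 1)) * (n + 1 : ℚ)
      = PowerSeries.coeff n (d⁄dX ℚ (f ^ (j + 1))) := (coeff_derivative _ _).symm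
  have hl : d⁄dX ℚ (f ^ (j + 1)) = (j + 1 : ℕ) • (f ^ j * d⁄dX ℚ f) := by
    rw [Derivation.leibniz_pow]
    simp [smul_eq_mul]
  have : PowerSeries.coeff (n + 1) (f ^ (j + 1)) * (n + 1 : ℚ)
      = (j + 1 : ℚ) * PowerSeries.coeff n (d⁄dX ℚ f * f ^ j) := by
    rw [hd, hl, map_nsmul]
    rw [mul_comm (d⁄dX ℚ f)]
    ring
  rw [div_mul_eq_mul_div, this, Nat.factorial_succ]
  push_cast
  field_simp

lemma ode_uniq {a f g : PowerSeries ℚ} (hf : d⁄dX ℚ f = a * f) (hg : d⁄dX ℚ g = a * g)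
    (h0 : constantCoeff f = constantCoeff g) : f = g := by
  ext n
  induction n using Nat.strong_induction_on with
  | _ n ih =>
    match n with
    | 0 => simpa using h0
    | n + 1 =>
      have hD : PowerSeries.coeff n (d⁄dX ℚ f) = PowerSeries.coeff n (d⁄dX ℚ g) := by
        rw [hf, hg, coeff_mul, coeff_mul]
        refine sum_congr rfl fun p hp => ?_
        have := mem_antidiagonal.mp hp
        rw [ih p.2 (by omega)]
      rw [coeff_derivative, coeff_derivative] at hD
      have hn : ((n : ℚ) + 1) ≠ 0 := by positivity
      exact mul_right_cancel₀ hn hD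

lemma X_mul_Sser :
    (X : PowerSeries ℚ) * Sser = rescale (1/2 : ℚ) (exp ℚ) - rescale (-(1/2) : ℚ) (exp ℚ) := by
  ext n
  rw [map_sub, coeff_rescale, coeff_rescale]
  simp only [coeff_exp, Algebra.algebraMap_self_apply]
  match n with
  | 0 => simp
  | n + 1 =>
    rw [coeff_succ_X_mul]
    simp only [Sser, coeff_mk]
    rcases Nat.even_or_odd n with ⟨m, rfl⟩ | ⟨m, rfl⟩
    · have h1 : (m + m) % 2 = 0 := by omega
      have h2 : (m + m) / 2 = m := by omega
      rw [if_pos h1, h2]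
      have hodd : (-(1/2) : ℚ) ^ (m + m + 1) = -((1/2 : ℚ) ^ (m + m + 1)) := by
        rw [neg_pow]
        have : (-1 : ℚ) ^ (m + m + 1) = -1 := Odd.neg_one_pow ⟨m, by ring⟩
        rw [this]; ring
      rw [hodd]
      have hp : ((1:ℚ)/2) ^ (m + m + 1) = 1 / ((4:ℚ) ^ m * 2) := by
        rw [div_pow, one_pow, pow_succ,
          show ((2:ℚ)) ^ (m + m) = 4 ^ m by
            rw [show ((4:ℚ)) = 2 ^ 2 by norm_num, ← pow_mul, two_mul]]
      rw [hp]
      have hne : ((m + m + 1).factorial : ℚ) ≠ 0 := by positivity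
      have h4ne : ((4:ℚ) ^ m) ≠ 0 := by positivity
      field_simp
      ring
    · have h1 : (2 * m + 1) % 2 = 1 := by omega
      rw [if_neg (by omega)]
      have : (-(1/2) : ℚ) ^ (2 * m + 1 + 1) = ((1/2 : ℚ) ^ (2 * m + 1 + 1)) := by
        rw [neg_pow]
        have : (-1 : ℚ) ^ (2 * m + 1 + 1) = 1 := Even.neg_one_pow ⟨m+1, by ring⟩
        rw [this]; ring
      rw [this]
      ring

lemma deriv_rescale_exp (a : ℚ) :
    d⁄dX ℚ (rescale a (exp ℚ)) = C a * rescale a (exp ℚ) := by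
  ext n
  rw [coeff_derivative, coeff_rescale, coeff_C_mul, coeff_rescale]
  simp only [coeff_exp, Algebra.algebraMap_self_apply]
  rw [Nat.factorial_succ]
  have h1 : ((n+1).factorial : ℚ) ≠ 0 := by positivity
  have h2 : ((n:ℚ)+1) ≠ 0 := by positivity
  push_cast
  field_simp
  ring

lemma rescale_half_mul_self :
    rescale (1/2 : ℚ) (exp ℚ) * rescale (1/2 : ℚ) (exp ℚ) = exp ℚ := by
  rw [exp_mul_exp_eq_exp_add]
  norm_num

lemma rescale_half_mul_neg :
    rescale (1/2 : ℚ) (exp ℚ) * rescale (-(1/2) : ℚ) (exp ℚ) = 1 := by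
  rw [exp_mul_exp_eq_exp_add]
  norm_num

lemma rescale_half_ne_zero : rescale (1/2 : ℚ) (exp ℚ) ≠ 0 := by
  intro h
  have h1 : constantCoeff (rescale (1/2 : ℚ) (exp ℚ)) = 1 := by
    rw [← coeff_zero_eq_constantCoeff_apply, coeff_rescale]
    simp [coeff_exp]
  rw [h] at h1
  simp at h1

lemma hAlg :
    (X : PowerSeries ℚ) * (C (1/2) * (rescale (1/2 : ℚ) (exp ℚ) + rescale (-(1/2) : ℚ) (exp ℚ)))
    = (bernoulliPowerSeries ℚ + C (1/2) * X) *
        (rescale (1/2 : ℚ) (exp ℚ) - rescale (-(1/2) : ℚ) (exp ℚ)) := by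
  apply mul_right_cancel₀ rescale_half_ne_zero
  have h1 := rescale_half_mul_self
  have h2 := rescale_half_mul_neg
  have hB := bernoulliPowerSeries_mul_exp_sub_one ℚ
  have hc : (C (1/2 : ℚ) : PowerSeries ℚ) + C (1/2) = 1 := by rw [← map_add]; norm_num
  linear_combination (X * C (1/2)) * h1 + (X * C (1/2)) * h2
    - (bernoulliPowerSeries ℚ + C (1/2) * X) * h1
    + (bernoulliPowerSeries ℚ + C (1/2) * X) * h2 - hB + X * hc

lemma hXDL : (X : PowerSeries ℚ) * d⁄dX ℚ Lser
    = bernoulliPowerSeries ℚ - 1 + C (1/2) * X := by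
  ext n
  rw [map_add, map_sub, coeff_C_mul]
  simp only [bernoulliPowerSeries, coeff_mk]
  match n with
  | 0 =>
    rw [coeff_zero_X_mul]
    simp [bernoulli_zero]
  | 1 =>
    rw [coeff_succ_X_mul, coeff_derivative]
    simp [Lser, bernoulli_one, coeff_X]
    norm_num
  | n + 2 =>
    rw [coeff_succ_X_mul, coeff_derivative]
    have hX : PowerSeries.coeff (n+2) (X : PowerSeries ℚ) = 0 := by
      rw [coeff_X]; simp
    have h1 : PowerSeries.coeff (n+2) (1 : PowerSeries ℚ) = 0 := by
      rw [coeff_one]; simp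
    rw [hX, h1, mul_zero, sub_zero, add_zero]
    simp only [Lser, coeff_mk]
    rcases Nat.even_or_odd (n+2) with he | ho
    · have hm : ¬(n + 2 = 0 ∨ (n + 2) % 2 = 1) := by
        rcases he with ⟨m, hm'⟩; omega
      rw [if_neg hm]
      have hne1 : ((n:ℚ) + 2) ≠ 0 := by positivity
      have hne2 : (((n+2).factorial : ℚ)) ≠ 0 := by positivity
      push_cast
      field_simp
      ring_nf
      simp
    · have hm : (n + 2 = 0 ∨ (n + 2) % 2 = 1) := by
        rcases ho with ⟨m, hm'⟩; omega
      rw [if_pos hm, zero_mul]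
      have hb : bernoulli (n + 2) = 0 := by
        rw [bernoulli_eq_bernoulli'_of_ne_one (by omega)]
        exact bernoulli'_eq_zero_of_odd ho (by omega)
      rw [hb, zero_div, map_zero]

lemma deriv_Sser : d⁄dX ℚ Sser = d⁄dX ℚ Lser * Sser := by
  have e1 : d⁄dX ℚ ((X : PowerSeries ℚ) * Sser) = Sser + X * d⁄dX ℚ Sser := by
    rw [Derivation.leibniz, derivative_X, smul_eq_mul, smul_eq_mul, mul_one]
    ring
  have e2 : d⁄dX ℚ ((X : PowerSeries ℚ) * Sser)
      = C (1/2) * (rescale (1/2 : ℚ) (exp ℚ) + rescale (-(1/2) : ℚ) (exp ℚ)) := by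
    rw [X_mul_Sser, map_sub, deriv_rescale_exp, deriv_rescale_exp, map_neg, neg_mul,
      sub_neg_eq_add, mul_add]
  have hT := X_mul_Sser
  have hA := hAlg
  have hL := hXDL
  have key : (X : PowerSeries ℚ) * ((X : PowerSeries ℚ) * d⁄dX ℚ Sser)
      = (X : PowerSeries ℚ) * ((X : PowerSeries ℚ) * (d⁄dX ℚ Lser * Sser)) := by
    linear_combination (-(X : PowerSeries ℚ)) * e1 + (X : PowerSeries ℚ) * e2 + hA
      - (bernoulliPowerSeries ℚ + C (1/2) * X) * hT - ((X : PowerSeries ℚ) * Sser) * hL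
  have hX0 : (X : PowerSeries ℚ) ≠ 0 := X_ne_zero
  exact mul_left_cancel₀ hX0 (mul_left_cancel₀ hX0 key)

/-- `ln S(x) = ∑_{k>0} B_{2k}/(2k·(2k)!) x^{2k}`, stated in exponentiated form:
`S(x) = exp(∑_{k>0} B_{2k}/(2k·(2k)!) x^{2k})`, where `B_m` are the Bernoulli
numbers defined by `x/(eˣ-1) = ∑ B_m xᵐ/m!` (Mathlib's `bernoulli`). -/
theorem log_S_bernoulli :
    expOf (PowerSeries.mk fun m =>
        if m = 0 ∨ m % 2 = 1 then 0
        else bernoulli m / ((m : ℚ) * (m.factorial : ℚ))) = Sser := by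
  show expOf Lser = Sser
  have hL0 : constantCoeff Lser = 0 := by
    rw [← coeff_zero_eq_constantCoeff_apply]
    simp [Lser]
  refine ode_uniq (derivative_expOf hL0) deriv_Sser ?_
  rw [constantCoeff_expOf, ← coeff_zero_eq_constantCoeff_apply]
  simp [Sser]
end

section
/- For indeterminates q, A and each k ≥ 0, the q-binomial theorem gives ∑_{k_1 + 2k_2 + 3k_3 + ⋯ = k} ∏_{n ≥ 1} (1/(k_n! n^{k_n})) · ((A^n - A^{-n})/(1 - q^n))^{k_n} = ∏_{j=1}^k (A - A^{-1} q^{j-1})/(1 - q^j), as an identity of rational functions (or formal Laurent series) in q and A. -/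
/-!
With `p_n = (Aⁿ - A⁻ⁿ)/(1 - qⁿ)`, both sides `e_j` satisfy `e_0 = 1` and Newton's recursion
`j e_j = ∑_{n=1}^j p_n e_{j-n}`, which determines them in characteristic zero.
For the sum over partitions, write `j = ∑ n k_n` and remove one part `n`: this bijection onto the
partitions `μ'` of `j - n` relates the weights by `n k_n w(μ) = p_n w(μ')`.
For the product `H_j`, let `F = ∑ H_j tʲ` and `P = ∑ p_n tⁿ`. The relations
`(1 - At) F(t) = (1 - A⁻¹t) F(qt)` and `P(t) - P(qt) = ∑ (Aⁿ - A⁻ⁿ) tⁿ` give, coefficientwise,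
`(1 - q^{j+1}) S_{j+1} = (A - A⁻¹qʲ)(S_j + H_j)` for the coefficients `S_j` of `P F`. The sequence
`j H_j` satisfies the same recursion, hence equals `S_j`.
-/
open Finset

theorem Finset.Nat.sum_antidiagonal_eq_sum_Icc {M : Type*} [AddCommMonoid M] {f : ℕ → ℕ → M}
    (hf : ∀ b, f 0 b = 0) (j : ℕ) :
    ∑ x ∈ antidiagonal j, f x.1 x.2 = ∑ n ∈ Icc 1 j, f n (j - n) := by
  rw [Nat.sum_antidiagonal_eq_sum_range_succ f, range_eq_Ico,
    sum_eq_sum_Ico_succ_bot (Nat.succ_pos j), hf, zero_add, zero_add, Nat.succ_eq_add_one,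
    Ico_add_one_right_eq_Icc]

theorem Nat.Partition.sum_Icc_mul_count {j : ℕ} (μ : Nat.Partition j) :
    ∑ n ∈ Icc 1 j, n * μ.parts.count n = j := by
  have hsub : μ.parts.toFinset ⊆ Icc 1 j := fun n hn => by
    rw [Multiset.mem_toFinset] at hn
    exact mem_Icc.mpr ⟨μ.parts_pos hn, μ.le_of_mem_parts hn⟩
  calc ∑ n ∈ Icc 1 j, n * μ.parts.count n
      = ∑ n ∈ μ.parts.toFinset, μ.parts.count n • n := by
        rw [← sum_subset hsub fun n _ hn => by
          simp [Multiset.count_eq_zero.mpr (by simpa using hn)]]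
        exact sum_congr rfl fun n _ => mul_comm _ _
    _ = j := by rw [← sum_multiset_count, μ.parts_sum]

theorem eq_of_natCast_mul_eq_sum_Icc {K : Type*} [Field K] [CharZero K] {p f g : ℕ → K} {k : ℕ}
    (h0 : f 0 = g 0)
    (hf : ∀ j ≤ k, (j : K) * f j = ∑ n ∈ Icc 1 j, p n * f (j - n))
    (hg : ∀ j ≤ k, (j : K) * g j = ∑ n ∈ Icc 1 j, p n * g (j - n)) :
    ∀ j ≤ k, f j = g j := by
  intro j
  induction j using Nat.strong_induction_on with
  | _ j ih =>
    intro hj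
    rcases j with _ | m
    · exact h0
    · refine mul_left_cancel₀ (Nat.cast_ne_zero.mpr m.succ_ne_zero) ?_
      rw [hf _ hj, hg _ hj]
      refine sum_congr rfl fun n hn => ?_
      have hn := mem_Icc.mp hn
      rw [ih _ (by omega) (by omega)]

section PowerSumExpansion

variable {K : Type*} [Field K] (p : ℕ → K)

def powerSumTerm (s : Multiset ℕ) : K :=
  ∏ n ∈ s.toFinset,
    1 / (((s.count n).factorial : K) * (n : K) ^ (s.count n)) * p n ^ (s.count n)

def completeHomOfPowerSums (j : ℕ) : K :=
  ∑ μ : Nat.Partition j, powerSumTerm p μ.parts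

theorem completeHomOfPowerSums_zero : completeHomOfPowerSums p 0 = 1 := by
  simp [completeHomOfPowerSums, powerSumTerm]

theorem powerSumTerm_eq_prod_of_subset {s : Multiset ℕ} {T : Finset ℕ} (h : s.toFinset ⊆ T) :
    powerSumTerm p s =
      ∏ n ∈ T, 1 / (((s.count n).factorial : K) * (n : K) ^ (s.count n)) * p n ^ (s.count n) :=
  prod_subset h fun n _ hn => by simp [Multiset.count_eq_zero.mpr (by simpa using hn)]

variable [CharZero K]

theorem natCast_mul_count_mul_powerSumTerm_cons {n : ℕ} (hn : n ≠ 0) (s : Multiset ℕ) :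
    (n : K) * ((n ::ₘ s).count n : K) * powerSumTerm p (n ::ₘ s) = p n * powerSumTerm p s := by
  have hmem : n ∈ (n ::ₘ s).toFinset := by simp
  have hsub : s.toFinset ⊆ (n ::ₘ s).toFinset := by simp [subset_insert]
  rw [powerSumTerm_eq_prod_of_subset p hsub, powerSumTerm, ← mul_prod_erase _ _ hmem,
    ← mul_prod_erase _ _ hmem]
  have hrest : ∀ m ∈ (n ::ₘ s).toFinset.erase n, (n ::ₘ s).count m = s.count m :=
    fun m hm => Multiset.count_cons_of_ne (ne_of_mem_erase hm) s
  rw [prod_congr rfl fun m hm => by rw [hrest m hm], Multiset.count_cons_self]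
  have hn' : (n : K) ≠ 0 := Nat.cast_ne_zero.mpr hn
  simp only [Nat.factorial_succ, pow_succ, Nat.cast_mul, Nat.cast_add, Nat.cast_one]
  field_simp

theorem sum_natCast_mul_count_mul_powerSumTerm {j n : ℕ} (hn : 1 ≤ n) (hnj : n ≤ j) :
    ∑ μ : Nat.Partition j, (n : K) * (μ.parts.count n : K) * powerSumTerm p μ.parts =
      p n * completeHomOfPowerSums p (j - n) := by
  rw [← Fintype.sum_subtype_add_sum_subtype (fun μ : Nat.Partition j => n ∈ μ.parts),
    Fintype.sum_eq_zero (fun μ : {μ : Nat.Partition j // n ∉ μ.parts} => _)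
      fun μ => by simp [Multiset.count_eq_zero.mpr μ.2],
    add_zero, completeHomOfPowerSums, mul_sum,
    ← (Nat.Partition.partitionWithPartEquiv hn hnj).symm.sum_comp]
  refine sum_congr rfl fun μ _ => ?_
  rw [Nat.Partition.partitionWithPartEquiv_symm_apply_parts]
  exact natCast_mul_count_mul_powerSumTerm_cons p (by omega) μ.parts

theorem natCast_mul_completeHomOfPowerSums (j : ℕ) :
    (j : K) * completeHomOfPowerSums p j =
      ∑ n ∈ Icc 1 j, p n * completeHomOfPowerSums p (j - n) :=
  calc (j : K) * completeHomOfPowerSums p j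
      = ∑ μ : Nat.Partition j, ∑ n ∈ Icc 1 j,
          (n : K) * (μ.parts.count n : K) * powerSumTerm p μ.parts := by
        rw [completeHomOfPowerSums, mul_sum]
        refine sum_congr rfl fun μ _ => ?_
        rw [← sum_mul]
        congr 1
        exact_mod_cast μ.sum_Icc_mul_count.symm
    _ = ∑ n ∈ Icc 1 j, ∑ μ : Nat.Partition j,
          (n : K) * (μ.parts.count n : K) * powerSumTerm p μ.parts := sum_comm
    _ = ∑ n ∈ Icc 1 j, p n * completeHomOfPowerSums p (j - n) :=
        sum_congr rfl fun n hn =>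
          sum_natCast_mul_count_mul_powerSumTerm p (mem_Icc.mp hn).1 (mem_Icc.mp hn).2

end PowerSumExpansion

section QSpecialization

variable {K : Type*} [Field K] (A q : K)

theorem sum_antidiagonal_succ_pow_sub_inv_pow (h : ℕ → K) (m : ℕ) :
    ∑ x ∈ antidiagonal (m + 1), (A ^ x.1 - A⁻¹ ^ x.1) * h x.2 =
      A⁻¹ * ∑ x ∈ antidiagonal m, (A ^ x.1 - A⁻¹ ^ x.1) * h x.2 +
        (A - A⁻¹) * ∑ x ∈ antidiagonal m, A ^ x.1 * h x.2 := by
  rw [Nat.sum_antidiagonal_succ, pow_zero, pow_zero, sub_self, zero_mul, zero_add, mul_sum,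
    mul_sum, ← sum_add_distrib]
  exact sum_congr rfl fun x _ => by ring

def specPowerSum (n : ℕ) : K := (A ^ n - A⁻¹ ^ n) / (1 - q ^ n)

def specCompleteHom (j : ℕ) : K := ∏ i ∈ Icc 1 j, (A - A⁻¹ * q ^ (i - 1)) / (1 - q ^ i)

theorem specPowerSum_zero : specPowerSum A q 0 = 0 := by simp [specPowerSum]

theorem specCompleteHom_zero : specCompleteHom A q 0 = 1 := by simp [specCompleteHom]

variable {q} {k : ℕ} (hq : ∀ i, 1 ≤ i → i ≤ k → q ^ i ≠ 1)
include hq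

theorem one_sub_pow_mul_specPowerSum {n : ℕ} (hn : n ≤ k) :
    (1 - q ^ n) * specPowerSum A q n = A ^ n - A⁻¹ ^ n := by
  rcases Nat.eq_zero_or_pos n with rfl | hpos
  · simp
  · exact mul_div_cancel₀ _ (sub_ne_zero.mpr (hq n hpos hn).symm)

theorem one_sub_pow_mul_specCompleteHom_succ {m : ℕ} (hm : m + 1 ≤ k) :
    (1 - q ^ (m + 1)) * specCompleteHom A q (m + 1) =
      (A - A⁻¹ * q ^ m) * specCompleteHom A q m := by
  rw [specCompleteHom, prod_Icc_succ_top (by omega), Nat.add_sub_cancel, mul_comm,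
    mul_assoc, div_mul_cancel₀ _ (sub_ne_zero.mpr (hq _ (by omega) hm).symm), ← specCompleteHom,
    mul_comm]

theorem sub_inv_mul_sum_antidiagonal_pow_mul_specCompleteHom {m : ℕ} (hm : m ≤ k) :
    (A - A⁻¹) * ∑ x ∈ antidiagonal m, A ^ x.1 * (q ^ x.2 * specCompleteHom A q x.2) =
      (A - A⁻¹ * q ^ m) * specCompleteHom A q m := by
  induction m with
  | zero => simp [specCompleteHom_zero]
  | succ m ih =>
    rw [Nat.sum_antidiagonal_succ]
    simp only [pow_succ', mul_assoc, ← mul_sum, pow_zero, one_mul]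
    linear_combination A * ih (by omega) - A * one_sub_pow_mul_specCompleteHom_succ A hq hm

theorem one_sub_pow_mul_sum_antidiagonal_succ {m : ℕ} (hm : m + 1 ≤ k) :
    (1 - q ^ (m + 1)) *
        ∑ x ∈ antidiagonal (m + 1), specPowerSum A q x.1 * specCompleteHom A q x.2 =
      (A - A⁻¹ * q ^ m) *
        (∑ x ∈ antidiagonal m, specPowerSum A q x.1 * specCompleteHom A q x.2 +
          specCompleteHom A q m) := by
  have hsplit : (1 - q ^ (m + 1)) *
        ∑ x ∈ antidiagonal (m + 1), specPowerSum A q x.1 * specCompleteHom A q x.2 =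
      ∑ x ∈ antidiagonal (m + 1),
          specPowerSum A q x.1 * ((1 - q ^ x.2) * specCompleteHom A q x.2) +
        ∑ x ∈ antidiagonal (m + 1),
          (A ^ x.1 - A⁻¹ ^ x.1) * (q ^ x.2 * specCompleteHom A q x.2) := by
    -- `1 - q ^ (a + b) = (1 - q ^ b) + q ^ b * (1 - q ^ a)`
    rw [mul_sum, ← sum_add_distrib]
    refine sum_congr rfl fun x hx => ?_
    rw [HasAntidiagonal.mem_antidiagonal] at hx
    rw [← one_sub_pow_mul_specPowerSum A hq (by omega : x.1 ≤ k), ← hx, pow_add]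
    ring
  have hfirst : ∑ x ∈ antidiagonal (m + 1),
          specPowerSum A q x.1 * ((1 - q ^ x.2) * specCompleteHom A q x.2) =
      (A - A⁻¹ * q ^ m) *
          ∑ x ∈ antidiagonal m, specPowerSum A q x.1 * specCompleteHom A q x.2 -
        A⁻¹ * ∑ x ∈ antidiagonal m,
          (A ^ x.1 - A⁻¹ ^ x.1) * (q ^ x.2 * specCompleteHom A q x.2) := by
    rw [Nat.sum_antidiagonal_succ', pow_zero, sub_self, zero_mul, mul_zero, zero_add, mul_sum,
      mul_sum, ← sum_sub_distrib]
    refine sum_congr rfl fun x hx => ?_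
    rw [HasAntidiagonal.mem_antidiagonal] at hx
    rw [one_sub_pow_mul_specCompleteHom_succ A hq (by omega),
      ← one_sub_pow_mul_specPowerSum A hq (by omega : x.1 ≤ k), ← hx, pow_add]
    ring
  rw [hsplit, hfirst,
    sum_antidiagonal_succ_pow_sub_inv_pow A (fun b => q ^ b * specCompleteHom A q b),
    sub_inv_mul_sum_antidiagonal_pow_mul_specCompleteHom A hq (by omega)]
  ring

theorem natCast_mul_specCompleteHom_eq_sum_antidiagonal {j : ℕ} (hj : j ≤ k) :
    (j : K) * specCompleteHom A q j =
      ∑ x ∈ antidiagonal j, specPowerSum A q x.1 * specCompleteHom A q x.2 := by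
  induction j with
  | zero => simp [specPowerSum_zero]
  | succ m ih =>
    refine mul_left_cancel₀ (sub_ne_zero.mpr (hq _ (by omega) hj).symm) ?_
    rw [one_sub_pow_mul_sum_antidiagonal_succ A hq hj, ← ih (by omega)]
    push_cast
    linear_combination ((m : K) + 1) * one_sub_pow_mul_specCompleteHom_succ A hq hj

theorem natCast_mul_specCompleteHom {j : ℕ} (hj : j ≤ k) :
    (j : K) * specCompleteHom A q j =
      ∑ n ∈ Icc 1 j, specPowerSum A q n * specCompleteHom A q (j - n) :=
  (natCast_mul_specCompleteHom_eq_sum_antidiagonal A hq hj).trans <|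
    Nat.sum_antidiagonal_eq_sum_Icc (f := fun a b => specPowerSum A q a * specCompleteHom A q b)
      (fun b => by rw [specPowerSum_zero, zero_mul]) j

end QSpecialization

theorem qbinomial_identity_general {K : Type*} [Field K] [CharZero K] (A q : K)
    (k : ℕ) (hq : ∀ j : ℕ, 1 ≤ j → j ≤ k → q ^ j ≠ 1) :
    ∑ μ : Nat.Partition k,
        ∏ n ∈ μ.parts.toFinset,
          (1 / (((μ.parts.count n).factorial : K) * (n : K) ^ (μ.parts.count n))) *
            ((A ^ n - A⁻¹ ^ n) / (1 - q ^ n)) ^ (μ.parts.count n) =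
      ∏ j ∈ Finset.Icc 1 k, (A - A⁻¹ * q ^ (j - 1)) / (1 - q ^ j) :=
  eq_of_natCast_mul_eq_sum_Icc (f := completeHomOfPowerSums (specPowerSum A q))
    (by rw [completeHomOfPowerSums_zero, specCompleteHom_zero])
    (fun j _ => natCast_mul_completeHomOfPowerSums _ j)
    (fun _ hj => natCast_mul_specCompleteHom A hq hj) k le_rfl

/-- The q-binomial theorem: for elements `A, q` of a field with `A ≠ 0` and
`q^j ≠ 1` for `1 ≤ j ≤ k`,
`∑_{k_1+2k_2+⋯=k} ∏_n (1/(k_n! n^{k_n}))·((Aⁿ-A⁻ⁿ)/(1-qⁿ))^{k_n}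
  = ∏_{j=1}^k (A - A⁻¹q^{j-1})/(1 - q^j)`,
the sum being indexed by partitions `μ` of `k` (with `k_n` the multiplicity of
the part `n`, so that this is an identity of rational functions in `q` and `A`). -/
theorem qbinomial_identity {K : Type*} [Field K] [CharZero K] (A q : K) (hA : A ≠ 0)
    (k : ℕ) (hq : ∀ j : ℕ, 1 ≤ j → j ≤ k → q ^ j ≠ 1) :
    ∑ μ : Nat.Partition k,
        ∏ n ∈ μ.parts.toFinset,
          (1 / (((μ.parts.count n).factorial : K) * (n : K) ^ (μ.parts.count n))) *
            ((A ^ n - A⁻¹ ^ n) / (1 - q ^ n)) ^ (μ.parts.count n) =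
      ∏ j ∈ Finset.Icc 1 k, (A - A⁻¹ * q ^ (j - 1)) / (1 - q ^ j) :=
  qbinomial_identity_general A q k hq
end
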